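/- arXiv:2502.13636 — 9 statements merged into one kernel-verified Lean document; each statement's English description precedes it below -/
import Mathlib

section
/- Lemma (bound via preceding neighbors, guarantee update): Let e : Fin k → Finset V and w' : Fin k → ℝ be a stack run with the guarantee update δ_g, i.e. 0 ≤ w' i for all i and W (e i) = w' i + ∑_{v ∈ e i} ∑_{j < i, v ∈ e j} w' j for every i. For an index i, let P(i) := {j : Fin k | j ≤ i ∧ (e j ∩ e i).Nonempty} be the set of preceding neighboring stack edges of e i, including i itself. Then for every i, ∑_{j ∈ P(i)} w' j ≤ W (e i). -/
/-- Bound via preceding neighbors (guarantee update): for a stack run `e, w'`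
with the guarantee update, and `P i` the set of preceding neighboring stack
edges of `e i` (including `i` itself), we have `∑ j ∈ P i, w' j ≤ W (e i)`. -/
theorem stack_guarantee_preceding_neighbors_bound
    {V : Type*} [Fintype V] [DecidableEq V] {k : ℕ}
    (W : Finset V → ℝ) (e : Fin k → Finset V) (w' : Fin k → ℝ)
    (hw_nonneg : ∀ i, 0 ≤ w' i)
    (hrun : ∀ i : Fin k, W (e i) = w' i +
      ∑ v ∈ e i, ∑ j ∈ Finset.univ.filter (fun j : Fin k => j < i ∧ v ∈ e j), w' j) :
    ∀ i : Fin k,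
      ∑ j ∈ Finset.univ.filter (fun j : Fin k => j ≤ i ∧ (e j ∩ e i).Nonempty), w' j
        ≤ W (e i) := by
  intro i
  rw [hrun i]
  -- rewrite the double sum as a sum over j of card * w' j
  have hds : ∑ v ∈ e i, ∑ j ∈ Finset.univ.filter (fun j : Fin k => j < i ∧ v ∈ e j), w' j
      = ∑ j ∈ Finset.univ.filter (fun j : Fin k => j < i),
          ((e i ∩ e j).card : ℝ) * w' j := by
    have : ∀ v ∈ e i, ∑ j ∈ Finset.univ.filter (fun j : Fin k => j < i ∧ v ∈ e j), w' j
        = ∑ j ∈ Finset.univ.filter (fun j : Fin k => j < i),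
            (if v ∈ e j then w' j else 0) := by
      intro v _
      rw [Finset.sum_ite, Finset.sum_const_zero, add_zero, Finset.filter_filter]
    rw [Finset.sum_congr rfl this, Finset.sum_comm]
    refine Finset.sum_congr rfl fun j _ => ?_
    rw [Finset.sum_ite, Finset.sum_const_zero, add_zero, Finset.sum_const,
      nsmul_eq_mul, Finset.filter_mem_eq_inter]
  rw [hds]
  -- split off i from the LHS
  have hsubset : Finset.univ.filter (fun j : Fin k => j ≤ i ∧ (e j ∩ e i).Nonempty)
      ⊆ insert i (Finset.univ.filter (fun j : Fin k => j < i ∧ (e j ∩ e i).Nonempty)) := by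
    intro j hj
    simp only [Finset.mem_filter, Finset.mem_univ, true_and] at hj
    rcases lt_or_eq_of_le hj.1 with h | h
    · exact Finset.mem_insert_of_mem (by simp [h, hj.2])
    · simp [h]
  calc ∑ j ∈ Finset.univ.filter (fun j : Fin k => j ≤ i ∧ (e j ∩ e i).Nonempty), w' j
      ≤ ∑ j ∈ insert i (Finset.univ.filter (fun j : Fin k => j < i ∧ (e j ∩ e i).Nonempty)),
          w' j := Finset.sum_le_sum_of_subset_of_nonneg hsubset (fun j _ _ => hw_nonneg j)
    _ ≤ w' i + ∑ j ∈ Finset.univ.filter (fun j : Fin k => j < i ∧ (e j ∩ e i).Nonempty),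
          w' j := by
        rcases Finset.decidableMem i (Finset.univ.filter
            (fun j : Fin k => j < i ∧ (e j ∩ e i).Nonempty)) with h | h
        · rw [Finset.sum_insert h]
        · rw [Finset.insert_eq_self.mpr h]
          exact le_add_of_nonneg_left (hw_nonneg i)
    _ ≤ w' i + ∑ j ∈ Finset.univ.filter (fun j : Fin k => j < i),
          ((e i ∩ e j).card : ℝ) * w' j := by
        gcongr
        have hsub2 : Finset.univ.filter (fun j : Fin k => j < i ∧ (e j ∩ e i).Nonempty)
            ⊆ Finset.univ.filter (fun j : Fin k => j < i) := by
          intro j hj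
          simp only [Finset.mem_filter] at hj ⊢
          exact ⟨hj.1, hj.2.1⟩
        refine (Finset.sum_le_sum ?_).trans
          (Finset.sum_le_sum_of_subset_of_nonneg hsub2 ?_)
        · intro j hj
          simp only [Finset.mem_filter, Finset.mem_univ, true_and] at hj
          have hne : (e i ∩ e j).Nonempty := by
            rw [Finset.inter_comm]; exact hj.2
          have hcard : 1 ≤ ((e i ∩ e j).card : ℝ) := by
            exact_mod_cast Finset.card_pos.mpr hne
          nlinarith [hw_nonneg j]
        · intro j _ _
          exact mul_nonneg (by positivity) (hw_nonneg j)
end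

section
/- Unwinding the stack recovers a (1/d)-fraction of the dual objective (guarantee update): Let d : ℕ with 0 < d. Let e : Fin k → Finset V and w' : Fin k → ℝ be a stack run with the guarantee update δ_g, i.e. 0 ≤ w' i for all i and W (e i) = w' i + ∑_{v ∈ e i} ∑_{j < i, v ∈ e j} w' j for every i, with final dual variables φ v := ∑_{i : v ∈ e i} w' i, and suppose (e i).card ≤ d for all i. Let M ⊆ Fin k be an unwinding matching: the hyperedges e i for i ∈ M are pairwise disjoint, and every index j : Fin k admits some i ∈ M with j ≤ i and (e i ∩ e j).Nonempty. Then (1/d) · ∑_{v ∈ V} φ v ≤ ∑_{i ∈ M} W (e i). -/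
/-- Unwinding the stack recovers a `1/d`-fraction of the dual objective
(guarantee update): for a stack run `e, w'` with the guarantee update, all edge
sizes at most `d`, final duals `φ v = ∑ i with v ∈ e i, w' i`, and an unwinding
matching `M` (pairwise disjoint stack edges covering every stack index by a
later-or-equal intersecting matched edge), we have
`(1/d) * ∑ v, φ v ≤ ∑ i ∈ M, W (e i)`. -/
theorem stack_guarantee_unwinding_bound
    {V : Type*} [Fintype V] [DecidableEq V] {k : ℕ}
    (d : ℕ) (hd : 0 < d)
    (W : Finset V → ℝ) (e : Fin k → Finset V) (w' : Fin k → ℝ)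
    (hw_nonneg : ∀ i, 0 ≤ w' i)
    (hrun : ∀ i : Fin k, W (e i) = w' i +
      ∑ v ∈ e i, ∑ j ∈ Finset.univ.filter (fun j : Fin k => j < i ∧ v ∈ e j), w' j)
    (hcard : ∀ i : Fin k, (e i).card ≤ d)
    (M : Finset (Fin k))
    (hM_disj : ∀ i ∈ M, ∀ j ∈ M, i ≠ j → Disjoint (e i) (e j))
    (hM_cover : ∀ j : Fin k, ∃ i ∈ M, j ≤ i ∧ (e i ∩ e j).Nonempty) :
    (1 / (d : ℝ)) * ∑ v : V, ∑ i ∈ Finset.univ.filter (fun i : Fin k => v ∈ e i), w' i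
      ≤ ∑ i ∈ M, W (e i) := by
  classical
  choose f hfM hfle hfne using hM_cover
  -- Step A: the dual objective equals ∑ i, card (e i) * w' i
  have hA : ∑ v : V, ∑ i ∈ Finset.univ.filter (fun i : Fin k => v ∈ e i), w' i
      = ∑ i : Fin k, ((e i).card : ℝ) * w' i := by
    simp only [Finset.sum_filter]
    rw [Finset.sum_comm]
    refine Finset.sum_congr rfl fun i _ => ?_
    rw [Finset.sum_ite_mem, Finset.univ_inter, Finset.sum_const, nsmul_eq_mul]
  -- Step B: each matched edge weight dominates the fiber of the cover map
  have hB : ∀ i ∈ M, ∑ j ∈ Finset.univ.filter (fun j => f j = i), w' j ≤ W (e i) := by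
    intro i hi
    rw [hrun i]
    -- rewrite the double sum
    have hdd : ∑ v ∈ e i, ∑ j ∈ Finset.univ.filter (fun j : Fin k => j < i ∧ v ∈ e j), w' j
        = ∑ j : Fin k, if j < i then ((e i ∩ e j).card : ℝ) * w' j else 0 := by
      simp only [Finset.sum_filter]
      rw [Finset.sum_comm]
      refine Finset.sum_congr rfl fun j _ => ?_
      by_cases h : j < i
      · simp only [h, true_and, if_true]
        rw [Finset.sum_ite_mem, Finset.sum_const, nsmul_eq_mul]
      · simp [h]
    rw [hdd]
    have hsplit : Finset.univ.filter (fun j => f j = i)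
        = (Finset.univ.filter (fun j => f j = i ∧ j < i)) ∪
          (Finset.univ.filter (fun j => f j = i ∧ ¬ j < i)) := by
      rw [← Finset.filter_or]
      refine Finset.filter_congr fun j _ => ?_
      tauto
    rw [hsplit, Finset.sum_union]
    · have h1 : ∑ j ∈ Finset.univ.filter (fun j => f j = i ∧ ¬ j < i), w' j ≤ w' i := by
        have hsub : Finset.univ.filter (fun j => f j = i ∧ ¬ j < i) ⊆ {i} := by
          intro j hj
          simp only [Finset.mem_filter] at hj
          have := hfle j
          rw [hj.2.1] at this
          have : j = i := le_antisymm this (not_lt.mp hj.2.2)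
          simp [this]
        calc ∑ j ∈ Finset.univ.filter (fun j => f j = i ∧ ¬ j < i), w' j
            ≤ ∑ j ∈ ({i} : Finset (Fin k)), w' j :=
              Finset.sum_le_sum_of_subset_of_nonneg hsub (fun j _ _ => hw_nonneg j)
          _ = w' i := Finset.sum_singleton _ _
      have h2 : ∑ j ∈ Finset.univ.filter (fun j => f j = i ∧ j < i), w' j
          ≤ ∑ j : Fin k, if j < i then ((e i ∩ e j).card : ℝ) * w' j else 0 := by
        rw [← Finset.sum_filter_add_sum_filter_not Finset.univ
          (fun j => f j = i ∧ j < i)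
          (fun j => if j < i then ((e i ∩ e j).card : ℝ) * w' j else 0)]
        have hle1 : ∑ j ∈ Finset.univ.filter (fun j => f j = i ∧ j < i), w' j
            ≤ ∑ j ∈ Finset.univ.filter (fun j => f j = i ∧ j < i),
                (if j < i then ((e i ∩ e j).card : ℝ) * w' j else 0) := by
          refine Finset.sum_le_sum fun j hj => ?_
          simp only [Finset.mem_filter] at hj
          rw [if_pos hj.2.2]
          have hcard1 : 1 ≤ (e i ∩ e j).card := by
            have := hfne j
            rw [hj.2.1] at this
            exact Finset.card_pos.mpr this
          have : (1 : ℝ) ≤ ((e i ∩ e j).card : ℝ) := by exact_mod_cast hcard1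
          nlinarith [hw_nonneg j]
        have hle2 : (0 : ℝ) ≤ ∑ j ∈ Finset.univ.filter (fun j => ¬(f j = i ∧ j < i)),
            (if j < i then ((e i ∩ e j).card : ℝ) * w' j else 0) := by
          refine Finset.sum_nonneg fun j _ => ?_
          split
          · exact mul_nonneg (Nat.cast_nonneg _) (hw_nonneg j)
          · exact le_refl 0
        linarith
      linarith
    · simp only [Finset.disjoint_left, Finset.mem_filter, Finset.mem_univ, true_and]
      tauto
  -- combine
  have hBsum : ∑ i : Fin k, w' i ≤ ∑ i ∈ M, W (e i) := by
    rw [← Finset.sum_fiberwise_of_maps_to (fun j _ => hfM j) w']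
    exact Finset.sum_le_sum hB
  rw [hA]
  have hdpos : (0 : ℝ) < d := by exact_mod_cast hd
  rw [div_mul_eq_mul_div, one_mul, div_le_iff₀ hdpos]
  calc ∑ i : Fin k, ((e i).card : ℝ) * w' i
      ≤ ∑ i : Fin k, (d : ℝ) * w' i := by
        refine Finset.sum_le_sum fun i _ => ?_
        have : ((e i).card : ℝ) ≤ (d : ℝ) := by exact_mod_cast hcard i
        nlinarith [hw_nonneg i]
    _ = (∑ i : Fin k, w' i) * d := by rw [← Finset.mul_sum, mul_comm]
    _ ≤ (∑ i ∈ M, W (e i)) * d := by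
        apply mul_le_mul_of_nonneg_right hBsum (le_of_lt hdpos)
end

section
/- Main stack theorem, guarantee update (1/(d(1+ε))-approximation): Let d : ℕ with 0 < d and ε ≥ 0. Let e : Fin k → Finset V and w' : Fin k → ℝ be a stack run with the guarantee update δ_g, i.e. 0 ≤ w' i for all i and W (e i) = w' i + ∑_{v ∈ e i} ∑_{j < i, v ∈ e j} w' j for every i, with (e i).card ≤ d for all i, and final dual variables φ v := ∑_{i : v ∈ e i} w' i. Let E be a finite set of hyperedges such that W f ≤ (1+ε) · ∑_{v ∈ f} φ v for every f ∈ E. Let M ⊆ Fin k be an unwinding matching: the hyperedges e i for i ∈ M are pairwise disjoint, and every index j : Fin k admits some i ∈ M with j ≤ i and (e i ∩ e j).Nonempty. Then every matching M* ⊆ E (pairwise disjoint hyperedges) satisfies ∑_{f ∈ M*} W f ≤ d·(1+ε) · ∑_{i ∈ M} W (e i). -/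
/-! The guarantee update makes `W (e i)` pay for the gain `w' i` together with every earlier gain
`w' j` whose edge meets `e i`. Since the unwinding matching `M` covers each index by a later
intersecting edge, the total gain is at most `∑ i ∈ M, W (e i)`. Each gain is counted in the dual
of at most `d` vertices, so the total dual is at most `d` times the total gain, and a matching `M*`
in `E` weighs at most `1 + ε` times the total dual of its (disjoint) vertex sets. -/

open Finset

theorem Finset.sum_sum_filter_eq_sum_card_filter_mul {α β : Type*} (s : Finset α) (t : Finset β)
    (R : α → β → Prop) [∀ a b, Decidable (R a b)] (g : β → ℝ) :
    ∑ a ∈ s, ∑ b ∈ t.filter (R a), g b = ∑ b ∈ t, #(s.filter (R · b)) * g b := by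
  simp_rw [sum_filter]
  rw [sum_comm]
  refine sum_congr rfl fun b _ => ?_
  rw [← sum_filter, sum_const, nsmul_eq_mul]

theorem Finset.sum_filter_exists_le_sum_sum_filter {α β : Type*} (s : Finset α) (t : Finset β)
    (R : α → β → Prop) [∀ a b, Decidable (R a b)] {g : β → ℝ} (hg : ∀ b, 0 ≤ g b) :
    ∑ b ∈ t.filter (fun b => ∃ a ∈ s, R a b), g b ≤ ∑ a ∈ s, ∑ b ∈ t.filter (R a), g b := by
  rw [sum_sum_filter_eq_sum_card_filter_mul, sum_filter]
  refine sum_le_sum fun b _ => ?_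
  split_ifs with h
  · have : (1 : ℝ) ≤ #(s.filter (R · b)) := by
      obtain ⟨a, ha, hab⟩ := h
      exact_mod_cast card_pos.2 ⟨a, mem_filter.2 ⟨ha, hab⟩⟩
    exact le_mul_of_one_le_left (hg b) this
  · exact mul_nonneg (Nat.cast_nonneg _) (hg b)

section StackRun

variable {V : Type*} [DecidableEq V] {k : ℕ} {W : Finset V → ℝ} {e : Fin k → Finset V}
  {w' : Fin k → ℝ}

theorem sum_dual_le_mul_sum_gain {d : ℕ} (hw : ∀ i, 0 ≤ w' i) (hcard : ∀ i, #(e i) ≤ d)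
    (S : Finset V) :
    ∑ v ∈ S, ∑ i ∈ univ.filter (fun i => v ∈ e i), w' i ≤ d * ∑ i, w' i := by
  rw [sum_sum_filter_eq_sum_card_filter_mul, mul_sum]
  refine sum_le_sum fun i _ => mul_le_mul_of_nonneg_right ?_ (hw i)
  exact_mod_cast (card_le_card fun v hv => (mem_filter.1 hv).2).trans (hcard i)

theorem sum_gain_le_weight_of_run (hw : ∀ i, 0 ≤ w' i)
    (hrun : ∀ i : Fin k, W (e i) = w' i +
      ∑ v ∈ e i, ∑ j ∈ univ.filter (fun j : Fin k => j < i ∧ v ∈ e j), w' j) (i : Fin k) :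
    ∑ j ∈ univ.filter (fun j => j ≤ i ∧ (e i ∩ e j).Nonempty), w' j ≤ W (e i) := by
  have hsplit : univ.filter (fun j => j ≤ i ∧ (e i ∩ e j).Nonempty) ⊆
      insert i (univ.filter fun j => j < i ∧ ∃ v ∈ e i, v ∈ e j) := by
    intro j hj
    obtain ⟨hji, v, hv⟩ := (mem_filter.1 hj).2
    rcases hji.lt_or_eq with hlt | rfl
    · exact mem_insert_of_mem (by simpa [hlt] using ⟨v, mem_inter.1 hv⟩)
    · exact mem_insert_self _ _
  have hearlier := sum_filter_exists_le_sum_sum_filter (e i) (univ.filter (· < i))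
    (fun v j => v ∈ e j) hw
  simp only [filter_filter] at hearlier
  calc _ ≤ ∑ j ∈ insert i (univ.filter fun j => j < i ∧ ∃ v ∈ e i, v ∈ e j), w' j :=
        sum_le_sum_of_subset_of_nonneg hsplit fun j _ _ => hw j
    _ ≤ w' i + ∑ j ∈ univ.filter (fun j => j < i ∧ ∃ v ∈ e i, v ∈ e j), w' j :=
        (sum_insert (by simp)).le
    _ ≤ W (e i) := by rw [hrun i]; linarith

theorem sum_gain_le_sum_weight_of_cover (hw : ∀ i, 0 ≤ w' i)
    (hrun : ∀ i : Fin k, W (e i) = w' i +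
      ∑ v ∈ e i, ∑ j ∈ univ.filter (fun j : Fin k => j < i ∧ v ∈ e j), w' j)
    {M : Finset (Fin k)} (hM_cover : ∀ j : Fin k, ∃ i ∈ M, j ≤ i ∧ (e i ∩ e j).Nonempty) :
    ∑ j, w' j ≤ ∑ i ∈ M, W (e i) :=
  calc ∑ j, w' j
        = ∑ j ∈ univ.filter (fun j => ∃ i ∈ M, j ≤ i ∧ (e i ∩ e j).Nonempty), w' j := by
        rw [filter_true_of_mem fun j _ => hM_cover j]
    _ ≤ ∑ i ∈ M, ∑ j ∈ univ.filter (fun j => j ≤ i ∧ (e i ∩ e j).Nonempty), w' j := by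
        -- `convert` only reconciles the two `Decidable` instances of the `∃ i ∈ M` filter
        convert sum_filter_exists_le_sum_sum_filter M univ
          (fun i j => j ≤ i ∧ (e i ∩ e j).Nonempty) hw
    _ ≤ ∑ i ∈ M, W (e i) := sum_le_sum fun i _ => sum_gain_le_weight_of_run hw hrun i

end StackRun

theorem stack_guarantee_approximation_general
    {V : Type*} [DecidableEq V] {k : ℕ}
    (d : ℕ) (ε : ℝ) (hε : 0 ≤ ε)
    (W : Finset V → ℝ) (e : Fin k → Finset V) (w' : Fin k → ℝ)
    (hw_nonneg : ∀ i, 0 ≤ w' i)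
    (hrun : ∀ i : Fin k, W (e i) = w' i +
      ∑ v ∈ e i, ∑ j ∈ Finset.univ.filter (fun j : Fin k => j < i ∧ v ∈ e j), w' j)
    (hcard : ∀ i : Fin k, (e i).card ≤ d)
    (E : Finset (Finset V))
    (hE : ∀ f ∈ E, W f ≤ (1 + ε) *
      ∑ v ∈ f, ∑ i ∈ Finset.univ.filter (fun i : Fin k => v ∈ e i), w' i)
    (M : Finset (Fin k))
    (hM_cover : ∀ j : Fin k, ∃ i ∈ M, j ≤ i ∧ (e i ∩ e j).Nonempty)
    (Mstar : Finset (Finset V)) (hMstarE : Mstar ⊆ E)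
    (hMstar_disj : ∀ f ∈ Mstar, ∀ g ∈ Mstar, f ≠ g → Disjoint f g) :
    ∑ f ∈ Mstar, W f ≤ (d : ℝ) * (1 + ε) * ∑ i ∈ M, W (e i) := by
  set φ : V → ℝ := fun v => ∑ i ∈ univ.filter (fun i => v ∈ e i), w' i
  have hdisj : (Mstar : Set (Finset V)).PairwiseDisjoint id := hMstar_disj
  calc ∑ f ∈ Mstar, W f ≤ ∑ f ∈ Mstar, (1 + ε) * ∑ v ∈ f, φ v :=
        sum_le_sum fun f hf => hE f (hMstarE hf)
    _ = (1 + ε) * ∑ v ∈ Mstar.biUnion id, φ v := by rw [← mul_sum, sum_biUnion hdisj]; rfl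
    _ ≤ (1 + ε) * (d * ∑ j, w' j) := by
        gcongr; exact sum_dual_le_mul_sum_gain hw_nonneg hcard _
    _ ≤ (1 + ε) * (d * ∑ i ∈ M, W (e i)) := by
        gcongr; exact sum_gain_le_sum_weight_of_cover hw_nonneg hrun hM_cover
    _ = d * (1 + ε) * ∑ i ∈ M, W (e i) := by ring

/-- Main stack theorem, guarantee update (`1/(d(1+ε))`-approximation): for a
stack run `e, w'` with the guarantee update, all edge sizes at most `d`, final
duals `φ v = ∑ i with v ∈ e i, w' i`, a set `E` of hyperedges with
`W f ≤ (1+ε) * ∑ v ∈ f, φ v` for every `f ∈ E`, and an unwinding matching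
`M ⊆ Fin k`, every matching `M* ⊆ E` satisfies
`∑ f ∈ M*, W f ≤ d*(1+ε) * ∑ i ∈ M, W (e i)`. -/
theorem stack_guarantee_approximation
    {V : Type*} [Fintype V] [DecidableEq V] {k : ℕ}
    (d : ℕ) (hd : 0 < d) (ε : ℝ) (hε : 0 ≤ ε)
    (W : Finset V → ℝ) (e : Fin k → Finset V) (w' : Fin k → ℝ)
    (hw_nonneg : ∀ i, 0 ≤ w' i)
    (hrun : ∀ i : Fin k, W (e i) = w' i +
      ∑ v ∈ e i, ∑ j ∈ Finset.univ.filter (fun j : Fin k => j < i ∧ v ∈ e j), w' j)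
    (hcard : ∀ i : Fin k, (e i).card ≤ d)
    (E : Finset (Finset V))
    (hE : ∀ f ∈ E, W f ≤ (1 + ε) *
      ∑ v ∈ f, ∑ i ∈ Finset.univ.filter (fun i : Fin k => v ∈ e i), w' i)
    (M : Finset (Fin k))
    (hM_disj : ∀ i ∈ M, ∀ j ∈ M, i ≠ j → Disjoint (e i) (e j))
    (hM_cover : ∀ j : Fin k, ∃ i ∈ M, j ≤ i ∧ (e i ∩ e j).Nonempty)
    (Mstar : Finset (Finset V)) (hMstarE : Mstar ⊆ E)
    (hMstar_disj : ∀ f ∈ Mstar, ∀ g ∈ Mstar, f ≠ g → Disjoint f g) :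
    ∑ f ∈ Mstar, W f ≤ (d : ℝ) * (1 + ε) * ∑ i ∈ M, W (e i) :=
  stack_guarantee_approximation_general d ε hε W e w' hw_nonneg hrun hcard E hE M hM_cover Mstar
    hMstarE hMstar_disj
end

section
/- Full-run version of the stack streaming algorithm with the guarantee update: Let V be a finite type with decidable equality, d : ℕ with 0 < d, ε ≥ 0, and let f : Fin m → Finset V be a stream of hyperedges with (f t).card ≤ d and 0 < W (f t) for all t, where W : Finset V → ℝ. Let φ : ℕ → V → ℝ satisfy φ 0 v = 0 for all v and, for every t < m and every v, φ (t+1) v = φ t v + (if (1+ε) · ∑_{u ∈ f t} φ t u ≤ W (f t) and v ∈ f t then W (f t) − ∑_{u ∈ f t} φ t u else 0). Call an index t admitted if (1+ε) · ∑_{u ∈ f t} φ t u ≤ W (f t). Let M be a set of admitted indices such that the hyperedges f i for i ∈ M are pairwise disjoint and every admitted index j admits some i ∈ M with j ≤ i and (f i ∩ f j).Nonempty. Then for every finite set M* of indices such that f i and f j are disjoint for distinct i, j ∈ M*, one has ∑_{j ∈ M*} W (f j) ≤ d·(1+ε) · ∑_{i ∈ M} W (f i). -/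
/-- Full-run version of the stack streaming algorithm with the guarantee
update: the stream `f : Fin m → Finset V` has edges of size at most `d` and
positive weight, the duals `φ` start at `0` and are updated as in the
algorithm, `M` is a set of admitted indices whose edges are pairwise disjoint
and which covers every admitted index by a later-or-equal intersecting index
of `M`; then every set `M*` of indices with pairwise disjoint edges satisfies
`∑ j ∈ M*, W (f j) ≤ d*(1+ε) * ∑ i ∈ M, W (f i)`. -/
theorem stack_streaming_full_run_guarantee
    {V : Type*} [Fintype V] [DecidableEq V] {m : ℕ}
    (d : ℕ) (hd : 0 < d) (ε : ℝ) (hε : 0 ≤ ε)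
    (W : Finset V → ℝ) (f : Fin m → Finset V)
    (hcard : ∀ t : Fin m, (f t).card ≤ d)
    (hpos : ∀ t : Fin m, 0 < W (f t))
    (φ : ℕ → V → ℝ)
    (hφ0 : ∀ v : V, φ 0 v = 0)
    (hφstep : ∀ t : Fin m, ∀ v : V,
      φ ((t : ℕ) + 1) v = φ t v +
        (if (1 + ε) * ∑ u ∈ f t, φ t u ≤ W (f t) ∧ v ∈ f t
          then W (f t) - ∑ u ∈ f t, φ t u else 0))
    (M : Finset (Fin m))
    (hM_adm : ∀ i ∈ M, (1 + ε) * ∑ u ∈ f i, φ i u ≤ W (f i))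
    (hM_disj : ∀ i ∈ M, ∀ j ∈ M, i ≠ j → Disjoint (f i) (f j))
    (hM_cover : ∀ j : Fin m, (1 + ε) * ∑ u ∈ f j, φ j u ≤ W (f j) →
      ∃ i ∈ M, j ≤ i ∧ (f i ∩ f j).Nonempty)
    (Mstar : Finset (Fin m))
    (hMstar_disj : ∀ i ∈ Mstar, ∀ j ∈ Mstar, i ≠ j → Disjoint (f i) (f j)) :
    ∑ j ∈ Mstar, W (f j) ≤ (d : ℝ) * (1 + ε) * ∑ i ∈ M, W (f i) := by
  classical
  set S : Fin m → ℝ := fun t => ∑ u ∈ f t, φ t u with hS_def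
  set inc : Fin m → V → ℝ :=
    fun t v => if (1 + ε) * S t ≤ W (f t) ∧ v ∈ f t then W (f t) - S t else 0 with hinc_def
  have hstep : ∀ t : Fin m, ∀ v : V, φ ((t : ℕ) + 1) v = φ t v + inc t v := hφstep
  -- nonnegativity of duals
  have hnonneg : ∀ n, n ≤ m → ∀ v : V, 0 ≤ φ n v := by
    intro n
    induction n with
    | zero => intro _ v; rw [hφ0]
    | succ k ih =>
      intro hk v
      have hkm : k < m := hk
      have ihk := ih (le_of_lt hkm)
      have h := hstep ⟨k, hkm⟩ v
      simp only [Fin.val_mk] at h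
      rw [h]
      have hS0 : 0 ≤ S ⟨k, hkm⟩ := Finset.sum_nonneg fun u _ => ihk u
      have : 0 ≤ inc ⟨k, hkm⟩ v := by
        simp only [hinc_def]
        split
        · next hcond => nlinarith [hcond.1]
        · exact le_refl 0
      linarith [ihk v]
  have hinc_nonneg : ∀ t : Fin m, ∀ v : V, 0 ≤ inc t v := by
    intro t v
    have hS0 : 0 ≤ S t := Finset.sum_nonneg fun u _ => hnonneg t (le_of_lt t.2) u
    simp only [hinc_def]
    split
    · next hcond => nlinarith [hcond.1]
    · exact le_refl 0
  -- closed formula for duals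
  have hformula : ∀ n, n ≤ m → ∀ v : V,
      φ n v = ∑ t ∈ Finset.univ.filter (fun t : Fin m => (t : ℕ) < n), inc t v := by
    intro n
    induction n with
    | zero => intro _ v; simp [hφ0]
    | succ k ih =>
      intro hk v
      have hkm : k < m := hk
      have h := hstep ⟨k, hkm⟩ v
      simp only [Fin.val_mk] at h
      have hset : Finset.univ.filter (fun t : Fin m => (t : ℕ) < k + 1)
          = insert (⟨k, hkm⟩ : Fin m)
              (Finset.univ.filter (fun t : Fin m => (t : ℕ) < k)) := by
        ext t
        simp only [Finset.mem_filter, Finset.mem_univ, true_and, Finset.mem_insert,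
          Fin.ext_iff, Fin.val_mk]
        omega
      rw [h, ih (le_of_lt hkm) v, hset, Finset.sum_insert (by simp)]
      ring
  -- monotonicity
  have hmono : ∀ a b : ℕ, a ≤ b → b ≤ m → ∀ v : V, φ a v ≤ φ b v := by
    intro a b hab hbm v
    rw [hformula a (hab.trans hbm) v, hformula b hbm v]
    apply Finset.sum_le_sum_of_subset_of_nonneg
    · intro t ht
      simp only [Finset.mem_filter, Finset.mem_univ, true_and] at ht ⊢
      omega
    · intro t _ _; exact hinc_nonneg t v
  -- partial sums of increments are below the dual
  have hpartial : ∀ (n : ℕ), n ≤ m → ∀ (T : Finset (Fin m)), (∀ t ∈ T, (t : ℕ) < n) →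
      ∀ v : V, ∑ t ∈ T, inc t v ≤ φ n v := by
    intro n hn T hT v
    rw [hformula n hn v]
    apply Finset.sum_le_sum_of_subset_of_nonneg
    · intro t ht
      simp only [Finset.mem_filter, Finset.mem_univ, true_and]
      exact hT t ht
    · intro t _ _; exact hinc_nonneg t v
  -- Claim A : every edge weight is below (1+ε) times its final dual sum
  have hA : ∀ j : Fin m, W (f j) ≤ (1 + ε) * ∑ u ∈ f j, φ m u := by
    intro j
    have hsum_nonneg : 0 ≤ ∑ u ∈ f j, φ m u :=
      Finset.sum_nonneg fun u _ => hnonneg m le_rfl u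
    have hmono_sum : S j ≤ ∑ u ∈ f j, φ m u :=
      Finset.sum_le_sum fun u _ => hmono j m (le_of_lt j.2) le_rfl u
    by_cases hadm : (1 + ε) * S j ≤ W (f j)
    · obtain ⟨i, hiM, hji, hne⟩ := hM_cover j (by rw [hS_def] at hadm; exact hadm)
      obtain ⟨v, hv⟩ := hne
      have hvj : v ∈ f j := (Finset.mem_inter.mp hv).2
      have hS0 : 0 ≤ S j := Finset.sum_nonneg fun u _ => hnonneg j (le_of_lt j.2) u
      have hWS : 0 ≤ W (f j) - S j := by nlinarith
      have hc1 : (1 : ℝ) ≤ (f j).card := by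
        have : 1 ≤ (f j).card := Finset.card_pos.mpr ⟨v, hvj⟩
        exact_mod_cast this
      have hsum1 : ∑ u ∈ f j, φ ((j : ℕ) + 1) u = S j + (f j).card * (W (f j) - S j) := by
        have : ∀ u ∈ f j, φ ((j : ℕ) + 1) u = φ j u + (W (f j) - S j) := by
          intro u hu
          rw [hstep j u]
          have hiv : inc j u = W (f j) - S j := by
            simp only [hinc_def]
            exact if_pos ⟨hadm, hu⟩
          rw [hiv]
        rw [Finset.sum_congr rfl this, Finset.sum_add_distrib, Finset.sum_const,
          nsmul_eq_mul]
      have hW1 : W (f j) ≤ ∑ u ∈ f j, φ ((j : ℕ) + 1) u := by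
        rw [hsum1]; nlinarith
      have hmono2 : ∑ u ∈ f j, φ ((j : ℕ) + 1) u ≤ ∑ u ∈ f j, φ m u :=
        Finset.sum_le_sum fun u _ => hmono ((j : ℕ) + 1) m j.2 le_rfl u
      nlinarith
    · push_neg at hadm
      nlinarith
  -- Step 1 : ∑_{M*} W ≤ (1+ε) ∑_v φ m v
  have hstep1 : ∑ j ∈ Mstar, W (f j) ≤ (1 + ε) * ∑ v : V, φ m v := by
    have h1 : ∑ j ∈ Mstar, W (f j) ≤ (1 + ε) * ∑ j ∈ Mstar, ∑ u ∈ f j, φ m u := by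
      rw [Finset.mul_sum]
      exact Finset.sum_le_sum fun j _ => hA j
    have h2 : ∑ j ∈ Mstar, ∑ u ∈ f j, φ m u ≤ ∑ v : V, φ m v := by
      rw [← Finset.sum_biUnion (fun i hi j hj hij => hMstar_disj i hi j hj hij)]
      apply Finset.sum_le_sum_of_subset_of_nonneg
      · exact Finset.subset_univ _
      · intro v _ _; exact hnonneg m le_rfl v
    nlinarith [Finset.sum_nonneg (fun (v : V) (_ : v ∈ Finset.univ) => hnonneg m le_rfl v)]
  -- Step 2 : ∑_v φ m v ≤ d * ∑_M W
  set A : Finset (Fin m) :=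
    Finset.univ.filter (fun t : Fin m => (1 + ε) * S t ≤ W (f t)) with hA_def
  have hWS_nonneg : ∀ t ∈ A, 0 ≤ W (f t) - S t := by
    intro t ht
    simp only [hA_def, Finset.mem_filter, Finset.mem_univ, true_and] at ht
    have hS0 : 0 ≤ S t := Finset.sum_nonneg fun u _ => hnonneg t (le_of_lt t.2) u
    nlinarith
  have hswap : ∑ v : V, φ m v = ∑ t ∈ A, ((f t).card : ℝ) * (W (f t) - S t) := by
    have hform : ∀ v : V, φ m v = ∑ t : Fin m, inc t v := by
      intro v
      rw [hformula m le_rfl v]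
      congr 1
      ext t
      simp [t.2]
    calc ∑ v : V, φ m v = ∑ v : V, ∑ t : Fin m, inc t v := by
          exact Finset.sum_congr rfl fun v _ => hform v
      _ = ∑ t : Fin m, ∑ v : V, inc t v := Finset.sum_comm
      _ = ∑ t ∈ A, ((f t).card : ℝ) * (W (f t) - S t) := by
          rw [← Finset.sum_filter_add_sum_filter_not Finset.univ
            (fun t : Fin m => (1 + ε) * S t ≤ W (f t))]
          have h1 : ∀ t ∈ A, ∑ v : V, inc t v = ((f t).card : ℝ) * (W (f t) - S t) := by
            intro t ht
            simp only [hA_def, Finset.mem_filter, Finset.mem_univ, true_and] at ht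
            simp only [hinc_def, ht, true_and]
            rw [Finset.sum_ite_mem, Finset.univ_inter, Finset.sum_const, nsmul_eq_mul]
          have h2 : ∀ t ∈ Finset.univ.filter
              (fun t : Fin m => ¬ ((1 + ε) * S t ≤ W (f t))), ∑ v : V, inc t v = 0 := by
            intro t ht
            simp only [Finset.mem_filter, Finset.mem_univ, true_and] at ht
            simp [hinc_def, ht]
          rw [Finset.sum_congr rfl h1, Finset.sum_congr rfl h2, Finset.sum_const_zero,
            add_zero]
  have hcardbound : ∑ t ∈ A, ((f t).card : ℝ) * (W (f t) - S t)
      ≤ (d : ℝ) * ∑ t ∈ A, (W (f t) - S t) := by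
    rw [Finset.mul_sum]
    apply Finset.sum_le_sum
    intro t ht
    have h1 : ((f t).card : ℝ) ≤ (d : ℝ) := by exact_mod_cast hcard t
    nlinarith [hWS_nonneg t ht]
  -- the charging argument
  have hcharge : ∑ t ∈ A, (W (f t) - S t) ≤ ∑ i ∈ M, W (f i) := by
    rcases Finset.eq_empty_or_nonempty A with hAe | ⟨t0, ht0⟩
    · rw [hAe, Finset.sum_empty]
      exact Finset.sum_nonneg fun i _ => le_of_lt (hpos i)
    · have hex : ∀ t ∈ A, ∃ p : Fin m × V,
          p.1 ∈ M ∧ t ≤ p.1 ∧ p.2 ∈ f p.1 ∧ p.2 ∈ f t := by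
        intro t ht
        simp only [hA_def, Finset.mem_filter, Finset.mem_univ, true_and] at ht
        obtain ⟨i, hiM, hti, hne⟩ := hM_cover t (by rw [hS_def] at ht; exact ht)
        obtain ⟨v, hv⟩ := hne
        exact ⟨(i, v), hiM, hti, (Finset.mem_inter.mp hv).1, (Finset.mem_inter.mp hv).2⟩
      set g : Fin m → Fin m × V := fun t =>
        if h : t ∈ A then (hex t h).choose else (hex t0 ht0).choose with hg_def
      have hg : ∀ t ∈ A, (g t).1 ∈ M ∧ t ≤ (g t).1 ∧ (g t).2 ∈ f (g t).1 ∧ (g t).2 ∈ f t := by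
        intro t ht
        simp only [hg_def, dif_pos ht]
        exact (hex t ht).choose_spec
      rw [← Finset.sum_fiberwise_of_maps_to (fun t ht => (hg t ht).1)
        (fun t => W (f t) - S t)]
      apply Finset.sum_le_sum
      intro i hiM
      set Ai : Finset (Fin m) := A.filter (fun t => (g t).1 = i) with hAi_def
      have hAiA : Ai ⊆ A := Finset.filter_subset _ _
      set C : Finset (Fin m) := Ai.erase i with hC_def
      have hClt : ∀ t ∈ C, (t : ℕ) < (i : ℕ) := by
        intro t ht
        have hne : t ≠ i := (Finset.mem_erase.mp ht).1
        have htAi : t ∈ Ai := (Finset.mem_erase.mp ht).2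
        have hti : t ≤ (g t).1 := (hg t (hAiA htAi)).2.1
        have hgi : (g t).1 = i := (Finset.mem_filter.mp htAi).2
        rw [hgi] at hti
        exact lt_of_le_of_ne hti (fun h => hne (Fin.ext h))
      have hCbound : ∑ t ∈ C, (W (f t) - S t) ≤ S i := by
        have hmapsC : ∀ t ∈ C, (g t).2 ∈ f i := by
          intro t ht
          have htAi : t ∈ Ai := (Finset.mem_erase.mp ht).2
          have := (hg t (hAiA htAi)).2.2.1
          rwa [(Finset.mem_filter.mp htAi).2] at this
        have heq : ∀ t ∈ C, W (f t) - S t = inc t (g t).2 := by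
          intro t ht
          have htA : t ∈ A := hAiA (Finset.mem_erase.mp ht).2
          have hadm : (1 + ε) * S t ≤ W (f t) := by
            simpa [hA_def] using htA
          have hmem : (g t).2 ∈ f t := (hg t htA).2.2.2
          have hiv : inc t (g t).2 = W (f t) - S t := by
            simp only [hinc_def]
            exact if_pos ⟨hadm, hmem⟩
          rw [hiv]
        rw [Finset.sum_congr rfl heq,
          ← Finset.sum_fiberwise_of_maps_to hmapsC (fun t => inc t (g t).2)]
        have : ∀ u ∈ f i, ∑ t ∈ C.filter (fun t => (g t).2 = u), inc t (g t).2 ≤ φ i u := by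
          intro u hu
          have : ∑ t ∈ C.filter (fun t => (g t).2 = u), inc t (g t).2
              = ∑ t ∈ C.filter (fun t => (g t).2 = u), inc t u := by
            apply Finset.sum_congr rfl
            intro t ht
            rw [(Finset.mem_filter.mp ht).2]
          rw [this]
          apply hpartial i (le_of_lt i.2)
          intro t ht
          exact hClt t (Finset.mem_filter.mp ht).1
        exact Finset.sum_le_sum this
      have hSi_le : S i ≤ W (f i) := by
        have h1 : (1 + ε) * S i ≤ W (f i) := by rw [hS_def]; exact hM_adm i hiM
        have hS0 : 0 ≤ S i := Finset.sum_nonneg fun u _ => hnonneg i (le_of_lt i.2) u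
        nlinarith
      by_cases hiAi : i ∈ Ai
      · have hsplit : ∑ t ∈ Ai, (W (f t) - S t)
            = (W (f i) - S i) + ∑ t ∈ C, (W (f t) - S t) := by
          rw [hC_def]
          exact (Finset.add_sum_erase Ai (fun t => W (f t) - S t) hiAi).symm
        rw [hsplit]
        linarith
      · have : C = Ai := Finset.erase_eq_of_notMem hiAi
        rw [← this]
        linarith
  -- combine
  have h2 : ∑ v : V, φ m v ≤ (d : ℝ) * ∑ i ∈ M, W (f i) := by
    rw [hswap]
    calc ∑ t ∈ A, ((f t).card : ℝ) * (W (f t) - S t)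
        ≤ (d : ℝ) * ∑ t ∈ A, (W (f t) - S t) := hcardbound
      _ ≤ (d : ℝ) * ∑ i ∈ M, W (f i) := by
          apply mul_le_mul_of_nonneg_left hcharge
          exact_mod_cast Nat.zero_le d
  calc ∑ j ∈ Mstar, W (f j) ≤ (1 + ε) * ∑ v : V, φ m v := hstep1
    _ ≤ (1 + ε) * ((d : ℝ) * ∑ i ∈ M, W (f i)) := by
        apply mul_le_mul_of_nonneg_left h2 (by linarith)
    _ = (d : ℝ) * (1 + ε) * ∑ i ∈ M, W (f i) := by ring
end

section
/- Dual feasibility of stack edges under the lenient update: Let e : Fin k → Finset V and w' : Fin k → ℝ be a stack run with the lenient update δ_lenient, i.e. 0 ≤ w' i and (e i).Nonempty for all i, and W (e i) = w' i + ∑_{v ∈ e i} ∑_{j < i, v ∈ e j} w' j / (e j).card for every i, and let φ v := ∑_{i : v ∈ e i} w' i / (e i).card be the final dual variables. Then for every index i, W (e i) ≤ ∑_{v ∈ e i} φ v. -/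
/-- Dual feasibility of stack edges under the lenient update `δ_lenient`:
for a stack run `e, w'` with `0 ≤ w' i`, `(e i).Nonempty`, and
`W (e i) = w' i + ∑ v ∈ e i, ∑ j < i with v ∈ e j, w' j / (e j).card`,
the final dual variables `φ v = ∑ i with v ∈ e i, w' i / (e i).card` satisfy
`W (e i) ≤ ∑ v ∈ e i, φ v` for every `i`. -/
theorem stack_lenient_dual_feasible
    {V : Type*} [Fintype V] [DecidableEq V] {k : ℕ}
    (W : Finset V → ℝ) (e : Fin k → Finset V) (w' : Fin k → ℝ)
    (hw_nonneg : ∀ i, 0 ≤ w' i)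
    (hne : ∀ i : Fin k, (e i).Nonempty)
    (hrun : ∀ i : Fin k, W (e i) = w' i +
      ∑ v ∈ e i, ∑ j ∈ Finset.univ.filter (fun j : Fin k => j < i ∧ v ∈ e j),
        w' j / ((e j).card : ℝ)) :
    ∀ i : Fin k, W (e i) ≤
      ∑ v ∈ e i, ∑ j ∈ Finset.univ.filter (fun j : Fin k => v ∈ e j),
        w' j / ((e j).card : ℝ) := by
  intro i
  rw [hrun i]
  have hcard : (0 : ℝ) < ((e i).card : ℝ) := by
    exact_mod_cast Finset.card_pos.mpr (hne i)
  have key : ∀ v ∈ e i,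
      w' i / ((e i).card : ℝ) +
        ∑ j ∈ Finset.univ.filter (fun j : Fin k => j < i ∧ v ∈ e j),
          w' j / ((e j).card : ℝ)
      ≤ ∑ j ∈ Finset.univ.filter (fun j : Fin k => v ∈ e j),
          w' j / ((e j).card : ℝ) := by
    intro v hv
    have hins : insert i (Finset.univ.filter (fun j : Fin k => j < i ∧ v ∈ e j))
        ⊆ Finset.univ.filter (fun j : Fin k => v ∈ e j) := by
      intro j hj
      simp only [Finset.mem_insert, Finset.mem_filter, Finset.mem_univ, true_and] at hj ⊢
      rcases hj with rfl | ⟨_, h⟩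
      · exact hv
      · exact h
    have hnotmem : i ∉ Finset.univ.filter (fun j : Fin k => j < i ∧ v ∈ e j) := by
      simp
    calc w' i / ((e i).card : ℝ) +
          ∑ j ∈ Finset.univ.filter (fun j : Fin k => j < i ∧ v ∈ e j),
            w' j / ((e j).card : ℝ)
        = ∑ j ∈ insert i (Finset.univ.filter (fun j : Fin k => j < i ∧ v ∈ e j)),
            w' j / ((e j).card : ℝ) := by rw [Finset.sum_insert hnotmem]
      _ ≤ _ := Finset.sum_le_sum_of_subset_of_nonneg hins
            (fun j _ _ => div_nonneg (hw_nonneg j) (Nat.cast_nonneg _))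
  calc w' i + ∑ v ∈ e i, ∑ j ∈ Finset.univ.filter (fun j : Fin k => j < i ∧ v ∈ e j),
          w' j / ((e j).card : ℝ)
      = ∑ v ∈ e i, (w' i / ((e i).card : ℝ) +
          ∑ j ∈ Finset.univ.filter (fun j : Fin k => j < i ∧ v ∈ e j),
            w' j / ((e j).card : ℝ)) := by
        rw [Finset.sum_add_distrib, Finset.sum_const, nsmul_eq_mul,
          mul_div_cancel₀ _ (ne_of_gt hcard)]
    _ ≤ _ := Finset.sum_le_sum key
end

section
/- Bound via preceding neighbors under the lenient update: Let d : ℕ with 0 < d. Let e : Fin k → Finset V and w' : Fin k → ℝ be a stack run with the lenient update δ_lenient, i.e. 0 ≤ w' i and (e i).Nonempty for all i, W (e i) = w' i + ∑_{v ∈ e i} ∑_{j < i, v ∈ e j} w' j / (e j).card for every i, and suppose (e i).card ≤ d for all i. For an index i, let P(i) := {j : Fin k | j ≤ i ∧ (e j ∩ e i).Nonempty}. Then for every i, (1/d) · ∑_{j ∈ P(i)} w' j ≤ W (e i). -/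
/-!
Under the lenient update, an earlier edge `e j` passes its share `w' j / #(e j)` on to `e i`
once for every vertex of `e j ∩ e i`. For a neighbour this is at least `w' j / #(e j) ≥ w' j / d`,
and `e i` itself contributes its full gain `w' i ≥ w' i / d`.
-/

open Finset

theorem sum_sum_filter_mem_eq_sum_card_inter_mul {α ι R : Type*} [DecidableEq α]
    [NonAssocSemiring R] (s : Finset α) (I : Finset ι) (t : ι → Finset α) (p : ι → Prop)
    [DecidablePred p] (f : ι → R) :
    ∑ v ∈ s, ∑ j ∈ I.filter (fun j => p j ∧ v ∈ t j), f j =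
      ∑ j ∈ I.filter p, (#(t j ∩ s) : R) * f j := by
  rw [sum_comm' (t' := I.filter p) (s' := fun j => t j ∩ s)]
  · simp only [sum_const, nsmul_eq_mul]
  · intro v j
    simp only [mem_filter, mem_inter]
    tauto

theorem natCast_mul_div_natCast_le {a : ℝ} (ha : 0 ≤ a) (n : ℕ) : (n : ℝ) * (a / n) ≤ a := by
  rcases Nat.eq_zero_or_pos n with rfl | hn
  · simpa using ha
  · rw [mul_div_cancel₀ a (by positivity)]

theorem sum_card_inter_mul_div_card_le_of_lenient_update {V : Type*} [DecidableEq V] {k : ℕ}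
    (W : Finset V → ℝ) (e : Fin k → Finset V) (w' : Fin k → ℝ) (i : Fin k) (hw : 0 ≤ w' i)
    (hrun : W (e i) = w' i +
      ∑ v ∈ e i, ∑ j ∈ univ.filter (fun j : Fin k => j < i ∧ v ∈ e j), w' j / (#(e j) : ℝ)) :
    ∑ j ∈ Iic i, (#(e j ∩ e i) : ℝ) * (w' j / #(e j)) ≤ W (e i) := by
  rw [hrun, sum_sum_filter_mem_eq_sum_card_inter_mul, ← Iio_insert, sum_insert notMem_Iio_self,
    inter_self, filter_gt_eq_Iio]
  gcongr
  exact natCast_mul_div_natCast_le hw _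

theorem div_le_card_inter_mul_div_card {α : Type*} [DecidableEq α] {s t : Finset α} {d : ℕ}
    {w : ℝ} (hw : 0 ≤ w) (hcard : #s ≤ d) (hmeet : (s ∩ t).Nonempty) :
    w / d ≤ #(s ∩ t) * (w / #s) := by
  have hs : (0 : ℝ) < #s := by exact_mod_cast (hmeet.mono inter_subset_left).card_pos
  calc w / d ≤ w / #s := div_le_div_of_nonneg_left hw hs (by exact_mod_cast hcard)
    _ ≤ #(s ∩ t) * (w / #s) := by
      refine le_mul_of_one_le_left (by positivity) ?_
      exact_mod_cast hmeet.card_pos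

theorem stack_lenient_preceding_neighbors_bound_general
    {V : Type*} [DecidableEq V] {k : ℕ}
    (d : ℕ)
    (W : Finset V → ℝ) (e : Fin k → Finset V) (w' : Fin k → ℝ)
    (hw_nonneg : ∀ i, 0 ≤ w' i)
    (hrun : ∀ i : Fin k, W (e i) = w' i +
      ∑ v ∈ e i, ∑ j ∈ Finset.univ.filter (fun j : Fin k => j < i ∧ v ∈ e j),
        w' j / ((e j).card : ℝ))
    (hcard : ∀ i : Fin k, (e i).card ≤ d) :
    ∀ i : Fin k,
      (1 / (d : ℝ)) *
        ∑ j ∈ Finset.univ.filter (fun j : Fin k => j ≤ i ∧ (e j ∩ e i).Nonempty), w' j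
          ≤ W (e i) := by
  intro i
  calc (1 / (d : ℝ)) * ∑ j ∈ univ.filter (fun j : Fin k => j ≤ i ∧ (e j ∩ e i).Nonempty), w' j
      = ∑ j ∈ univ.filter (fun j : Fin k => j ≤ i ∧ (e j ∩ e i).Nonempty), w' j / d := by
        rw [mul_sum]
        exact sum_congr rfl fun j _ => one_div_mul_eq_div _ _
    _ ≤ ∑ j ∈ univ.filter (fun j : Fin k => j ≤ i ∧ (e j ∩ e i).Nonempty),
          (#(e j ∩ e i) : ℝ) * (w' j / #(e j)) :=
        sum_le_sum fun j hj => div_le_card_inter_mul_div_card (hw_nonneg j) (hcard j)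
          (mem_filter.1 hj).2.2
    _ ≤ ∑ j ∈ Iic i, (#(e j ∩ e i) : ℝ) * (w' j / #(e j)) := by
        refine sum_le_sum_of_subset_of_nonneg (fun j hj => ?_) fun j _ _ => ?_
        · exact mem_Iic.2 (mem_filter.1 hj).2.1
        · have := hw_nonneg j
          positivity
    _ ≤ W (e i) := sum_card_inter_mul_div_card_le_of_lenient_update W e w' i (hw_nonneg i) (hrun i)

/-- Bound via preceding neighbors under the lenient update: for a stack run
`e, w'` with the lenient update and all edge sizes at most `d`, with `P i` the
set of preceding neighboring stack edges of `e i` (including `i`), we have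
`(1/d) * ∑ j ∈ P i, w' j ≤ W (e i)`. -/
theorem stack_lenient_preceding_neighbors_bound
    {V : Type*} [Fintype V] [DecidableEq V] {k : ℕ}
    (d : ℕ) (hd : 0 < d)
    (W : Finset V → ℝ) (e : Fin k → Finset V) (w' : Fin k → ℝ)
    (hw_nonneg : ∀ i, 0 ≤ w' i)
    (hne : ∀ i : Fin k, (e i).Nonempty)
    (hrun : ∀ i : Fin k, W (e i) = w' i +
      ∑ v ∈ e i, ∑ j ∈ Finset.univ.filter (fun j : Fin k => j < i ∧ v ∈ e j),
        w' j / ((e j).card : ℝ))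
    (hcard : ∀ i : Fin k, (e i).card ≤ d) :
    ∀ i : Fin k,
      (1 / (d : ℝ)) *
        ∑ j ∈ Finset.univ.filter (fun j : Fin k => j ≤ i ∧ (e j ∩ e i).Nonempty), w' j
          ≤ W (e i) :=
  stack_lenient_preceding_neighbors_bound_general d W e w' hw_nonneg hrun hcard
end

section
/- Main stack theorem, lenient update (1/(d(1+ε))-approximation): Let d : ℕ with 0 < d and ε ≥ 0. Let e : Fin k → Finset V and w' : Fin k → ℝ be a stack run with the lenient update δ_lenient, i.e. 0 ≤ w' i and (e i).Nonempty for all i, W (e i) = w' i + ∑_{v ∈ e i} ∑_{j < i, v ∈ e j} w' j / (e j).card for every i, with (e i).card ≤ d for all i, and final dual variables φ v := ∑_{i : v ∈ e i} w' i / (e i).card. Let E be a finite set of hyperedges such that W f ≤ (1+ε) · ∑_{v ∈ f} φ v for every f ∈ E. Let M ⊆ Fin k be an unwinding matching: the hyperedges e i for i ∈ M are pairwise disjoint, and every index j : Fin k admits some i ∈ M with j ≤ i and (e i ∩ e j).Nonempty. Then every matching M* ⊆ E (pairwise disjoint hyperedges) satisfies ∑_{f ∈ M*} W f ≤ d·(1+ε)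 · ∑_{i ∈ M} W (e i). -/
open Finset


/-- Main stack theorem, lenient update (`1/(d(1+ε))`-approximation): for a
stack run `e, w'` with the lenient update, all edge sizes at most `d`, final
duals `φ v = ∑ i with v ∈ e i, w' i / (e i).card`, a set `E` of hyperedges with
`W f ≤ (1+ε) * ∑ v ∈ f, φ v` for every `f ∈ E`, and an unwinding matching
`M ⊆ Fin k`, every matching `M* ⊆ E` satisfies
`∑ f ∈ M*, W f ≤ d*(1+ε) * ∑ i ∈ M, W (e i)`. -/
theorem stack_lenient_approximation
    {V : Type*} [Fintype V] [DecidableEq V] {k : ℕ}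
    (d : ℕ) (hd : 0 < d) (ε : ℝ) (hε : 0 ≤ ε)
    (W : Finset V → ℝ) (e : Fin k → Finset V) (w' : Fin k → ℝ)
    (hw_nonneg : ∀ i, 0 ≤ w' i)
    (hne : ∀ i : Fin k, (e i).Nonempty)
    (hrun : ∀ i : Fin k, W (e i) = w' i +
      ∑ v ∈ e i, ∑ j ∈ Finset.univ.filter (fun j : Fin k => j < i ∧ v ∈ e j),
        w' j / ((e j).card : ℝ))
    (hcard : ∀ i : Fin k, (e i).card ≤ d)
    (E : Finset (Finset V))
    (hE : ∀ f ∈ E, W f ≤ (1 + ε) *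
      ∑ v ∈ f, ∑ i ∈ Finset.univ.filter (fun i : Fin k => v ∈ e i),
        w' i / ((e i).card : ℝ))
    (M : Finset (Fin k))
    (hM_disj : ∀ i ∈ M, ∀ j ∈ M, i ≠ j → Disjoint (e i) (e j))
    (hM_cover : ∀ j : Fin k, ∃ i ∈ M, j ≤ i ∧ (e i ∩ e j).Nonempty)
    (Mstar : Finset (Finset V)) (hMstarE : Mstar ⊆ E)
    (hMstar_disj : ∀ f ∈ Mstar, ∀ g ∈ Mstar, f ≠ g → Disjoint f g) :
    ∑ f ∈ Mstar, W f ≤ (d : ℝ) * (1 + ε) * ∑ i ∈ M, W (e i) := by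
  classical
  set φ : V → ℝ := fun v => ∑ i ∈ Finset.univ.filter (fun i : Fin k => v ∈ e i),
      w' i / ((e i).card : ℝ) with hφ
  have hcpos : ∀ i : Fin k, (0:ℝ) < ((e i).card : ℝ) := fun i => by
    exact_mod_cast Finset.card_pos.mpr (hne i)
  have hφ_nonneg : ∀ v, 0 ≤ φ v := fun v =>
    Finset.sum_nonneg fun i _ => div_nonneg (hw_nonneg i) (Nat.cast_nonneg _)
  -- Step A : sum of duals equals sum of gains
  have hA : ∑ v, φ v = ∑ i, w' i := by
    have h1 : ∑ v, φ v = ∑ i : Fin k, ∑ v ∈ e i, w' i / ((e i).card : ℝ) := by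
      simp only [hφ, Finset.sum_filter]
      rw [Finset.sum_comm]
      congr 1; ext i
      rw [Finset.sum_ite_mem, Finset.univ_inter]
    rw [h1]
    refine Finset.sum_congr rfl fun i _ => ?_
    rw [Finset.sum_const, nsmul_eq_mul, mul_div_cancel₀ _ (ne_of_gt (hcpos i))]
  -- Step B : matching sum of duals bounded by total dual sum
  have hB : ∑ f ∈ Mstar, ∑ v ∈ f, φ v ≤ ∑ v, φ v := by
    rw [← Finset.sum_biUnion]
    · exact Finset.sum_le_sum_of_subset_of_nonneg (Finset.subset_univ _)
        (fun v _ _ => hφ_nonneg v)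
    · intro f hf g hg hfg
      exact hMstar_disj f hf g hg hfg
  -- Step C : total gain bounded by d * matching weight
  choose g hgM hgle hginter using hM_cover
  have hC : ∑ j, w' j ≤ (d : ℝ) * ∑ i ∈ M, W (e i) := by
    rw [← Finset.sum_fiberwise_of_maps_to (g := g) (fun j _ => hgM j) w',
      Finset.mul_sum]
    refine Finset.sum_le_sum fun i hi => ?_
    -- define T and swap the double sum in hrun
    set T : Fin k → ℝ := fun j => if j < i then ((e i ∩ e j).card : ℝ) * (w' j / ((e j).card : ℝ)) else 0 with hT
    have hT_nonneg : ∀ j, 0 ≤ T j := fun j => by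
      rw [hT]; dsimp only
      split
      · exact mul_nonneg (Nat.cast_nonneg _) (div_nonneg (hw_nonneg j) (Nat.cast_nonneg _))
      · exact le_refl 0
    have hswap : ∑ v ∈ e i, ∑ j ∈ Finset.univ.filter (fun j : Fin k => j < i ∧ v ∈ e j),
        w' j / ((e j).card : ℝ) = ∑ j, T j := by
      simp only [Finset.sum_filter]
      rw [Finset.sum_comm]
      refine Finset.sum_congr rfl fun j _ => ?_
      rw [hT]; dsimp only
      by_cases hj : j < i
      · simp only [hj, true_and, if_true]
        rw [Finset.sum_ite_mem, Finset.sum_const, nsmul_eq_mul]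
      · simp [hj]
    have hWi : (d : ℝ) * W (e i) = (d:ℝ) * w' i + ∑ j, (d:ℝ) * T j := by
      rw [hrun i, hswap, mul_add, Finset.mul_sum]
    rw [hWi]
    have hsplit := Finset.sum_filter_add_sum_filter_not
      (Finset.univ.filter (fun j => g j = i)) (fun j => j = i) w'
    rw [← hsplit]
    have h1 : ∑ j ∈ (Finset.univ.filter (fun j => g j = i)).filter (fun j => j = i), w' j
        ≤ (d:ℝ) * w' i := by
      have hsub : (Finset.univ.filter (fun j => g j = i)).filter (fun j => j = i) ⊆ {i} := by
        intro j hj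
        simp only [Finset.mem_filter] at hj
        simp [hj.2]
      calc ∑ j ∈ (Finset.univ.filter (fun j => g j = i)).filter (fun j => j = i), w' j
          ≤ ∑ j ∈ ({i} : Finset (Fin k)), w' j :=
            Finset.sum_le_sum_of_subset_of_nonneg hsub (fun j _ _ => hw_nonneg j)
        _ = w' i := Finset.sum_singleton _ _
        _ ≤ (d:ℝ) * w' i := by
            nlinarith [hw_nonneg i, (show (1:ℝ) ≤ (d:ℝ) by exact_mod_cast hd)]
    have h2 : ∑ j ∈ (Finset.univ.filter (fun j => g j = i)).filter (fun j => ¬ j = i), w' j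
        ≤ ∑ j, (d:ℝ) * T j := by
      refine le_trans (Finset.sum_le_sum (f := w') (g := fun j => (d:ℝ) * T j) ?_)
        (Finset.sum_le_sum_of_subset_of_nonneg (Finset.subset_univ _)
          (fun j _ _ => mul_nonneg (Nat.cast_nonneg _) (hT_nonneg j)))
      intro j hj
      simp only [Finset.mem_filter] at hj
      obtain ⟨⟨-, hgj⟩, hji⟩ := hj
      have hlt : j < i := lt_of_le_of_ne (hgj ▸ hgle j) hji
      have hint : 1 ≤ ((e i ∩ e j).card : ℝ) := by
        have := Finset.card_pos.mpr (hgj ▸ hginter j)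
        exact_mod_cast this
      rw [hT]; dsimp only
      rw [if_pos hlt]
      have hcle : ((e j).card : ℝ) ≤ (d : ℝ) := by exact_mod_cast hcard j
      have hdiv : 0 ≤ w' j / ((e j).card : ℝ) := div_nonneg (hw_nonneg j) (Nat.cast_nonneg _)
      calc w' j = ((e j).card : ℝ) * (w' j / ((e j).card : ℝ)) := by
            rw [mul_div_cancel₀ _ (ne_of_gt (hcpos j))]
        _ ≤ (d:ℝ) * (w' j / ((e j).card : ℝ)) := by
            exact mul_le_mul_of_nonneg_right hcle hdiv
        _ ≤ (d:ℝ) * (((e i ∩ e j).card : ℝ) * (w' j / ((e j).card : ℝ))) :=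
            mul_le_mul_of_nonneg_left (le_mul_of_one_le_left hdiv hint) (Nat.cast_nonneg _)
    linarith [h1, h2]
  -- combine
  have h1ε : (0:ℝ) ≤ 1 + ε := by linarith
  calc ∑ f ∈ Mstar, W f
      ≤ ∑ f ∈ Mstar, (1 + ε) * ∑ v ∈ f, φ v :=
        Finset.sum_le_sum fun f hf => hE f (hMstarE hf)
    _ = (1 + ε) * ∑ f ∈ Mstar, ∑ v ∈ f, φ v := by rw [Finset.mul_sum]
    _ ≤ (1 + ε) * ∑ v, φ v := mul_le_mul_of_nonneg_left hB h1ε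
    _ = (1 + ε) * ∑ i, w' i := by rw [hA]
    _ ≤ (1 + ε) * ((d:ℝ) * ∑ i ∈ M, W (e i)) := mul_le_mul_of_nonneg_left hC h1ε
    _ = (d : ℝ) * (1 + ε) * ∑ i ∈ M, W (e i) := by ring
end

section
/- Full-run guarantee for the greedy swapping streaming algorithm (SwapSet): Let V be a finite type with decidable equality, d : ℕ with 1 ≤ d, α > 0, and let f : Fin m → Finset V be a stream of hyperedges with (f t).Nonempty, (f t).card ≤ d and 0 < W (f t) for all t, where W : Finset V → ℝ. Let M : ℕ → Finset (Finset V) satisfy M 0 = ∅ and, for every t < m, writing C t := {g ∈ M t : (g ∩ f t).Nonempty}: M (t+1) = insert (f t) (M t \ C t) if (1+α) · ∑_{g ∈ C t} W g ≤ W (f t), and M (t+1) = M t otherwise. Then for every finite set M* of pairwise disjoint hyperedges with M* ⊆ Finset.image f Finset.univ, one has ∑_{g ∈ M*} W g ≤ (1+α) · ((d−1)/α + d) · ∑_{g ∈ M m} W g. -/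
/-- Full-run guarantee for the greedy swapping streaming algorithm (SwapSet):
`M` starts empty and, at each time `t`, if the incoming hyperedge `f t` weighs
at least `(1+α)` times the total weight of the conflicting matched hyperedges
`C t`, those are removed and `f t` is inserted; otherwise the matching is
unchanged. Then every matching `M*` consisting of streamed hyperedges satisfies
`∑ g ∈ M*, W g ≤ (1+α) * ((d-1)/α + d) * ∑ g ∈ M m, W g`. -/
theorem swapset_full_run_guarantee
    {V : Type*} [Fintype V] [DecidableEq V] {m : ℕ}
    (d : ℕ) (hd : 1 ≤ d) (α : ℝ) (hα : 0 < α)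
    (W : Finset V → ℝ) (f : Fin m → Finset V)
    (hne : ∀ t : Fin m, (f t).Nonempty)
    (hcard : ∀ t : Fin m, (f t).card ≤ d)
    (hpos : ∀ t : Fin m, 0 < W (f t))
    (M : ℕ → Finset (Finset V))
    (hM0 : M 0 = ∅)
    (hMstep : ∀ t : Fin m,
      M ((t : ℕ) + 1) =
        if (1 + α) * ∑ g ∈ (M t).filter (fun g => (g ∩ f t).Nonempty), W g ≤ W (f t)
        then insert (f t) (M t \ (M t).filter (fun g => (g ∩ f t).Nonempty))
        else M t)
    (Mstar : Finset (Finset V))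
    (hMstar_sub : Mstar ⊆ Finset.image f Finset.univ)
    (hMstar_disj : ∀ g ∈ Mstar, ∀ h ∈ Mstar, g ≠ h → Disjoint g h) :
    ∑ g ∈ Mstar, W g ≤ (1 + α) * (((d : ℝ) - 1) / α + d) * ∑ g ∈ M m, W g := by
  classical
  -- arrival time of a hyperedge
  set τ : Finset V → ℕ := fun e => sInf {n | ∃ h : n < m, f ⟨n, h⟩ = e} with hτdef
  have hτ : ∀ e ∈ Finset.image f Finset.univ, ∃ h : τ e < m, f ⟨τ e, h⟩ = e := by
    intro e he
    obtain ⟨s, -, hs⟩ := Finset.mem_image.mp he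
    have hne' : {n | ∃ h : n < m, f ⟨n, h⟩ = e}.Nonempty :=
      ⟨(s : ℕ), s.isLt, by simpa using hs⟩
    exact Nat.sInf_mem hne'
  have hα1 : (0:ℝ) < 1 + α := by linarith
  have hd1 : (0:ℝ) ≤ ((d:ℝ) - 1) / α := by
    apply div_nonneg _ hα.le
    have : (1:ℝ) ≤ d := by exact_mod_cast hd
    linarith
  have key : ∀ t, t ≤ m →
      ∃ S : Finset V, ∃ D : ℝ,
        (∀ g ∈ M t, ∃ s : Fin m, f s = g) ∧
        (∀ g ∈ M t, ∀ g' ∈ M t, g ≠ g' → Disjoint g g') ∧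
        (∀ v ∈ S, ∃ g ∈ M t, v ∈ g) ∧
        (∀ v ∈ S, ∃ e ∈ Mstar, v ∈ e ∧ τ e < t) ∧
        0 ≤ D ∧
        D ≤ (((d:ℝ) - 1) / α) * ∑ g ∈ M t, W g ∧
        ∑ e ∈ Mstar.filter (fun e => τ e < t), W e
          ≤ (1 + α) * (D + ∑ g ∈ M t, ((g ∩ S).card : ℝ) * W g) := by
    intro t
    induction t with
    | zero =>
      intro _
      refine ⟨∅, 0, ?_, ?_, ?_, ?_, le_refl 0, ?_, ?_⟩ <;> simp [hM0]
    | succ t ih =>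
      intro ht1
      have htm : t < m := lt_of_lt_of_le (Nat.lt_succ_self t) ht1
      obtain ⟨S, D, inv1, inv2, inv3, inv4, invD0, invD, invL⟩ := ih htm.le
      set t' : Fin m := ⟨t, htm⟩ with ht'def
      have hMs := hMstep t'
      rw [show ((t' : Fin m) : ℕ) = t from rfl] at hMs
      set Ct := (M t).filter (fun g => (g ∩ f t').Nonempty) with hCt
      have hCtsub : Ct ⊆ M t := Finset.filter_subset _ _
      have hWpos : ∀ g ∈ M t, 0 < W g := by
        intro g hg; obtain ⟨s, hs⟩ := inv1 g hg; exact hs ▸ hpos s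
      have hsumCt_nonneg : 0 ≤ ∑ g ∈ Ct, W g :=
        Finset.sum_nonneg fun g hg => (hWpos g (hCtsub hg)).le
      have hsumMt_nonneg : 0 ≤ ∑ g ∈ M t, W g :=
        Finset.sum_nonneg fun g hg => (hWpos g hg).le
      have harr_unique : ∀ e ∈ Mstar, τ e = t → e = f t' := by
        intro e he hte
        obtain ⟨h1, h2⟩ := hτ e (hMstar_sub he)
        have h3 : (⟨τ e, h1⟩ : Fin m) = t' := by
          apply Fin.ext; simpa using hte
        rw [← h2, h3]
      have hfilter_eq_of_no_arr : ¬(f t' ∈ Mstar ∧ τ (f t') = t) →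
          Mstar.filter (fun e => τ e < t + 1) = Mstar.filter (fun e => τ e < t) := by
        intro harr
        ext e
        simp only [Finset.mem_filter]
        constructor
        · rintro ⟨he, hlt⟩
          rcases Nat.lt_succ_iff_lt_or_eq.mp hlt with h | h
          · exact ⟨he, h⟩
          · have hee := harr_unique e he h
            rw [hee] at he h
            exact absurd ⟨he, h⟩ harr
        · rintro ⟨he, hlt⟩; exact ⟨he, hlt.trans (Nat.lt_succ_self t)⟩
      have hfilter_eq_of_arr : f t' ∈ Mstar → τ (f t') = t →
          Mstar.filter (fun e => τ e < t + 1)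
            = insert (f t') (Mstar.filter (fun e => τ e < t)) := by
        intro h1 h2
        ext e
        simp only [Finset.mem_insert, Finset.mem_filter]
        constructor
        · rintro ⟨he, hlt⟩
          rcases Nat.lt_succ_iff_lt_or_eq.mp hlt with h | h
          · exact Or.inr ⟨he, h⟩
          · exact Or.inl (harr_unique e he h)
        · rintro (rfl | ⟨he, hlt⟩)
          · exact ⟨h1, by rw [h2]; exact Nat.lt_succ_self t⟩
          · exact ⟨he, hlt.trans (Nat.lt_succ_self t)⟩
      have hft_not_arrived : f t' ∉ Mstar.filter (fun e => τ e < t) ∨ True := Or.inr trivial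
      have hnotS : ∀ v ∈ f t', f t' ∈ Mstar → τ (f t') = t → v ∉ S := by
        intro v hv hfM hft hvS
        obtain ⟨e, heM, hve, hlt⟩ := inv4 v hvS
        by_cases hef : e = f t'
        · rw [hef, hft] at hlt; exact lt_irrefl t hlt
        · exact (Finset.disjoint_left.mp (hMstar_disj e heM (f t') hfM hef)) hve hv
      by_cases hacc : (1 + α) * ∑ g ∈ Ct, W g ≤ W (f t')
      · -- ACCEPT
        have hM1 : M (t + 1) = insert (f t') (M t \ Ct) := by
          rw [hMs, if_pos hacc]
        have hftCt : f t' ∈ M t → f t' ∈ Ct := by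
          intro h
          refine Finset.mem_filter.mpr ⟨h, ?_⟩
          simpa using hne t'
        have hftnot : f t' ∉ M t \ Ct := by
          intro h
          rw [Finset.mem_sdiff] at h
          exact h.2 (hftCt h.1)
        have hsum_split : ∀ (h : Finset V → ℝ),
            ∑ g ∈ M t, h g = ∑ g ∈ M t \ Ct, h g + ∑ g ∈ Ct, h g :=
          fun h => (Finset.sum_sdiff hCtsub).symm
        have hsum_new : ∀ (h : Finset V → ℝ),
            ∑ g ∈ M (t + 1), h g = h (f t') + ∑ g ∈ M t \ Ct, h g := by
          intro h; rw [hM1, Finset.sum_insert hftnot]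
        have hdisjCt : ∀ g ∈ M t \ Ct, Disjoint g (f t') := by
          intro g hg
          rw [Finset.mem_sdiff] at hg
          rw [Finset.disjoint_iff_inter_eq_empty]
          by_contra hne''
          exact hg.2 (Finset.mem_filter.mpr ⟨hg.1, Finset.nonempty_iff_ne_empty.mpr hne''⟩)
        have inv1' : ∀ g ∈ M (t + 1), ∃ s : Fin m, f s = g := by
          intro g hg
          rw [hM1, Finset.mem_insert] at hg
          rcases hg with rfl | hg
          · exact ⟨t', rfl⟩
          · exact inv1 g (Finset.mem_sdiff.mp hg).1
        have inv2' : ∀ g ∈ M (t + 1), ∀ g' ∈ M (t + 1), g ≠ g' → Disjoint g g' := by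
          intro g hg g' hg' hgg'
          rw [hM1, Finset.mem_insert] at hg hg'
          rcases hg with rfl | hg
          · rcases hg' with rfl | hg'
            · exact absurd rfl hgg'
            · exact (hdisjCt g' hg').symm
          · rcases hg' with rfl | hg'
            · exact hdisjCt g hg
            · exact inv2 g (Finset.mem_sdiff.mp hg).1 g' (Finset.mem_sdiff.mp hg').1 hgg'
        have hgrow : ∑ g ∈ M t, W g + α * ∑ g ∈ Ct, W g ≤ ∑ g ∈ M (t + 1), W g := by
          have h1 := hsum_new W
          have h2 := hsum_split W
          nlinarith [hacc]
        -- stranded vertices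
        set B := (Ct.sup id) \ f t' with hB
        have hmemB : ∀ x, x ∈ B ↔ (∃ g ∈ Ct, x ∈ g) ∧ x ∉ f t' := by
          intro x
          rw [hB, Finset.mem_sdiff, Finset.mem_sup]
          simp
        set S'' := S \ B with hS''
        have hS''sub : S'' ⊆ S := Finset.sdiff_subset
        have hrest : ∀ g ∈ M t \ Ct, g ∩ S'' = g ∩ S := by
          intro g hg
          ext x
          simp only [Finset.mem_inter, hS'', Finset.mem_sdiff]
          constructor
          · rintro ⟨hxg, hxS, -⟩; exact ⟨hxg, hxS⟩
          · rintro ⟨hxg, hxS⟩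
            refine ⟨hxg, hxS, fun hxB => ?_⟩
            obtain ⟨⟨g', hg', hxg'⟩, -⟩ := (hmemB x).mp hxB
            have hne3 : g ≠ g' := fun h => (Finset.mem_sdiff.mp hg).2 (h ▸ hg')
            exact (Finset.disjoint_left.mp
              (inv2 g (Finset.mem_sdiff.mp hg).1 g' (hCtsub hg') hne3)) hxg hxg'
        have hft_inter : f t' ∩ S'' = f t' ∩ S := by
          ext x
          simp only [Finset.mem_inter, hS'', Finset.mem_sdiff]
          constructor
          · rintro ⟨hxf, hxS, -⟩; exact ⟨hxf, hxS⟩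
          · rintro ⟨hxf, hxS⟩
            exact ⟨hxf, hxS, fun hxB => ((hmemB x).mp hxB).2 hxf⟩
        have hdecomp : f t' ∩ S = Ct.biUnion (fun g => g ∩ S ∩ f t') := by
          ext x
          simp only [Finset.mem_inter, Finset.mem_biUnion]
          constructor
          · rintro ⟨hxf, hxS⟩
            obtain ⟨g, hg, hxg⟩ := inv3 x hxS
            exact ⟨g, Finset.mem_filter.mpr ⟨hg, ⟨x, Finset.mem_inter.mpr ⟨hxg, hxf⟩⟩⟩,
              ⟨hxg, hxS⟩, hxf⟩
          · rintro ⟨g, hg, ⟨hxg, hxS⟩, hxf⟩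
            exact ⟨hxf, hxS⟩
        have hcard_decomp : (f t' ∩ S).card = ∑ g ∈ Ct, (g ∩ S ∩ f t').card := by
          rw [hdecomp]
          apply Finset.card_biUnion
          intro g hg g' hg' hne4
          refine Finset.disjoint_left.mpr fun x hx hx' => ?_
          have h1 : x ∈ g := (Finset.mem_inter.mp (Finset.mem_inter.mp hx).1).1
          have h2 : x ∈ g' := (Finset.mem_inter.mp (Finset.mem_inter.mp hx').1).1
          exact (Finset.disjoint_left.mp (inv2 g (hCtsub hg) g' (hCtsub hg') hne4)) h1 h2
        have hWle : ∀ g ∈ Ct, W g ≤ W (f t') := by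
          intro g hg
          have h1 : W g ≤ ∑ g' ∈ Ct, W g' :=
            Finset.single_le_sum (fun g' hg' => (hWpos g' (hCtsub hg')).le) hg
          nlinarith
        have hkey : ∑ g ∈ Ct, ((g ∩ S ∩ f t').card : ℝ) * W g
            ≤ ((f t' ∩ S).card : ℝ) * W (f t') := by
          calc ∑ g ∈ Ct, ((g ∩ S ∩ f t').card : ℝ) * W g
              ≤ ∑ g ∈ Ct, ((g ∩ S ∩ f t').card : ℝ) * W (f t') := by
                apply Finset.sum_le_sum
                intro g hg
                have := hpos t'
                exact mul_le_mul_of_nonneg_left (hWle g hg) (Nat.cast_nonneg _)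
            _ = ((f t' ∩ S).card : ℝ) * W (f t') := by
                rw [← Finset.sum_mul]
                congr 1
                rw [hcard_decomp]
                push_cast
                rfl
        set D' := D + ∑ g ∈ Ct, (((g ∩ S) \ f t').card : ℝ) * W g with hD'
        have hXnn : 0 ≤ ∑ g ∈ Ct, (((g ∩ S) \ f t').card : ℝ) * W g :=
          Finset.sum_nonneg fun g hg => mul_nonneg (Nat.cast_nonneg _) (hWpos g (hCtsub hg)).le
        have hD'0 : 0 ≤ D' := by rw [hD']; linarith
        have hD'le : D' ≤ (((d:ℝ) - 1) / α) * ∑ g ∈ M (t + 1), W g := by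
          have hterm : ∀ g ∈ Ct, (((g ∩ S) \ f t').card : ℝ) * W g ≤ ((d:ℝ) - 1) * W g := by
            intro g hg
            have hsub : (g ∩ S) \ f t' ⊆ g \ f t' :=
              Finset.sdiff_subset_sdiff Finset.inter_subset_left (le_refl _)
            have h3 : (g ∩ f t').card + (g \ f t').card = g.card :=
              Finset.card_inter_add_card_sdiff g (f t')
            have h4 : 1 ≤ (g ∩ f t').card :=
              Finset.card_pos.mpr (Finset.mem_filter.mp hg).2
            have h5 : g.card ≤ d := by
              obtain ⟨s, hs⟩ := inv1 g (hCtsub hg)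
              rw [← hs]; exact hcard s
            have h6 : ((g ∩ S) \ f t').card ≤ d - 1 :=
              le_trans (Finset.card_le_card hsub) (by omega)
            have h7 : (((g ∩ S) \ f t').card : ℝ) ≤ (d:ℝ) - 1 := by
              have := Nat.cast_le (α := ℝ).mpr h6
              rwa [Nat.cast_sub hd, Nat.cast_one] at this
            exact mul_le_mul_of_nonneg_right h7 (hWpos g (hCtsub hg)).le
          have hsum1 : ∑ g ∈ Ct, (((g ∩ S) \ f t').card : ℝ) * W g
              ≤ ((d:ℝ) - 1) * ∑ g ∈ Ct, W g := by
            rw [Finset.mul_sum]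
            exact Finset.sum_le_sum hterm
          have h8 := mul_le_mul_of_nonneg_left hgrow hd1
          have h9 : (((d:ℝ) - 1) / α) * (∑ g ∈ M t, W g + α * ∑ g ∈ Ct, W g)
              = (((d:ℝ) - 1) / α) * ∑ g ∈ M t, W g + ((d:ℝ) - 1) * ∑ g ∈ Ct, W g := by
            field_simp
          rw [hD']
          linarith
        by_cases harr : f t' ∈ Mstar ∧ τ (f t') = t
        · -- accept with opt arrival
          obtain ⟨hfM, hft⟩ := harr
          set v0 := (hne t').choose with hv0
          have hv0f : v0 ∈ f t' := (hne t').choose_spec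
          have hv0S : v0 ∉ S := hnotS v0 hv0f hfM hft
          set S' := insert v0 S'' with hS'
          refine ⟨S', D', inv1', inv2', ?_, ?_, hD'0, hD'le, ?_⟩
          · intro v hv
            rw [hS', Finset.mem_insert] at hv
            rcases hv with rfl | hv
            · exact ⟨f t', by rw [hM1]; exact Finset.mem_insert_self _ _, hv0f⟩
            · obtain ⟨g, hg, hvg⟩ := inv3 v (hS''sub hv)
              by_cases hgC : g ∈ Ct
              · have hvB : v ∉ B := (Finset.mem_sdiff.mp hv).2
                have : v ∈ f t' := by
                  by_contra hvf
                  exact hvB ((hmemB v).mpr ⟨⟨g, hgC, hvg⟩, hvf⟩)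
                exact ⟨f t', by rw [hM1]; exact Finset.mem_insert_self _ _, this⟩
              · exact ⟨g, by
                  rw [hM1]
                  exact Finset.mem_insert_of_mem (Finset.mem_sdiff.mpr ⟨hg, hgC⟩), hvg⟩
          · intro v hv
            rw [hS', Finset.mem_insert] at hv
            rcases hv with rfl | hv
            · exact ⟨f t', hfM, hv0f, by rw [hft]; exact Nat.lt_succ_self t⟩
            · obtain ⟨e, he, hve, hlt⟩ := inv4 v (hS''sub hv)
              exact ⟨e, he, hve, hlt.trans (Nat.lt_succ_self t)⟩
          · -- the main inequality
            rw [hfilter_eq_of_arr hfM hft]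
            have hftnotf : f t' ∉ Mstar.filter (fun e => τ e < t) := by
              intro h
              rw [Finset.mem_filter, hft] at h
              exact lt_irrefl t h.2
            rw [Finset.sum_insert hftnotf]
            have hftS' : f t' ∩ S' = insert v0 (f t' ∩ S) := by
              rw [hS', Finset.inter_insert_of_mem hv0f, hft_inter]
            have hnv0 : v0 ∉ f t' ∩ S := fun h => hv0S (Finset.mem_inter.mp h).2
            have hcard1 : ((f t' ∩ S').card : ℝ) = ((f t' ∩ S).card : ℝ) + 1 := by
              rw [hftS', Finset.card_insert_of_notMem hnv0]
              push_cast
              ring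
            have hrest' : ∀ g ∈ M t \ Ct, g ∩ S' = g ∩ S := by
              intro g hg
              rw [hS', Finset.inter_insert_of_notMem
                (fun h => (Finset.disjoint_left.mp (hdisjCt g hg)) h hv0f), hrest g hg]
            have hLnew : ∑ g ∈ M (t + 1), ((g ∩ S').card : ℝ) * W g
                = (((f t' ∩ S).card : ℝ) + 1) * W (f t')
                  + ∑ g ∈ M t \ Ct, ((g ∩ S).card : ℝ) * W g := by
              rw [hsum_new]
              congr 1
              · rw [hcard1]
              · exact Finset.sum_congr rfl fun g hg => by rw [hrest' g hg]
            have hLold : ∑ g ∈ M t, ((g ∩ S).card : ℝ) * W g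
                = ∑ g ∈ M t \ Ct, ((g ∩ S).card : ℝ) * W g
                  + ∑ g ∈ Ct, ((g ∩ S ∩ f t').card : ℝ) * W g
                  + ∑ g ∈ Ct, (((g ∩ S) \ f t').card : ℝ) * W g := by
              rw [hsum_split (fun g => ((g ∩ S).card : ℝ) * W g)]
              have : ∀ g ∈ Ct, ((g ∩ S).card : ℝ) * W g
                  = ((g ∩ S ∩ f t').card : ℝ) * W g + (((g ∩ S) \ f t').card : ℝ) * W g := by
                intro g hg
                have := Finset.card_inter_add_card_sdiff (g ∩ S) (f t')
                have hcast : ((g ∩ S).card : ℝ)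
                    = ((g ∩ S ∩ f t').card : ℝ) + (((g ∩ S) \ f t').card : ℝ) := by
                  exact_mod_cast congrArg (Nat.cast (R := ℝ)) this.symm
                rw [hcast]; ring
              rw [Finset.sum_congr rfl this, Finset.sum_add_distrib]
              ring
            rw [hLnew]
            have hWf := hpos t'
            have hexp : (1 + α) * (D' + ((((f t' ∩ S).card : ℝ) + 1) * W (f t')
                  + ∑ g ∈ M t \ Ct, ((g ∩ S).card : ℝ) * W g))
                = (1 + α) * (D + ∑ g ∈ M t, ((g ∩ S).card : ℝ) * W g)
                  + (1 + α) * ((((f t' ∩ S).card : ℝ)) * W (f t')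
                      - ∑ g ∈ Ct, ((g ∩ S ∩ f t').card : ℝ) * W g)
                  + (1 + α) * W (f t') := by
              rw [hD', hLold]; ring
            have h10 : 0 ≤ (1 + α) * ((((f t' ∩ S).card : ℝ)) * W (f t')
                - ∑ g ∈ Ct, ((g ∩ S ∩ f t').card : ℝ) * W g) := by
              apply mul_nonneg hα1.le
              linarith
            nlinarith [invL, hWf]
        · -- accept without opt arrival
          refine ⟨S'', D', inv1', inv2', ?_, ?_, hD'0, hD'le, ?_⟩
          · intro v hv
            obtain ⟨g, hg, hvg⟩ := inv3 v (hS''sub hv)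
            by_cases hgC : g ∈ Ct
            · have hvB : v ∉ B := (Finset.mem_sdiff.mp hv).2
              have : v ∈ f t' := by
                by_contra hvf
                exact hvB ((hmemB v).mpr ⟨⟨g, hgC, hvg⟩, hvf⟩)
              exact ⟨f t', by rw [hM1]; exact Finset.mem_insert_self _ _, this⟩
            · exact ⟨g, by
                rw [hM1]
                exact Finset.mem_insert_of_mem (Finset.mem_sdiff.mpr ⟨hg, hgC⟩), hvg⟩
          · intro v hv
            obtain ⟨e, he, hve, hlt⟩ := inv4 v (hS''sub hv)
            exact ⟨e, he, hve, hlt.trans (Nat.lt_succ_self t)⟩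
          · rw [hfilter_eq_of_no_arr harr]
            have hLnew : ∑ g ∈ M (t + 1), ((g ∩ S'').card : ℝ) * W g
                = ((f t' ∩ S).card : ℝ) * W (f t')
                  + ∑ g ∈ M t \ Ct, ((g ∩ S).card : ℝ) * W g := by
              rw [hsum_new]
              congr 1
              · rw [hft_inter]
              · exact Finset.sum_congr rfl fun g hg => by rw [hrest g hg]
            have hLold : ∑ g ∈ M t, ((g ∩ S).card : ℝ) * W g
                = ∑ g ∈ M t \ Ct, ((g ∩ S).card : ℝ) * W g
                  + ∑ g ∈ Ct, ((g ∩ S ∩ f t').card : ℝ) * W g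
                  + ∑ g ∈ Ct, (((g ∩ S) \ f t').card : ℝ) * W g := by
              rw [hsum_split (fun g => ((g ∩ S).card : ℝ) * W g)]
              have : ∀ g ∈ Ct, ((g ∩ S).card : ℝ) * W g
                  = ((g ∩ S ∩ f t').card : ℝ) * W g + (((g ∩ S) \ f t').card : ℝ) * W g := by
                intro g hg
                have := Finset.card_inter_add_card_sdiff (g ∩ S) (f t')
                have hcast : ((g ∩ S).card : ℝ)
                    = ((g ∩ S ∩ f t').card : ℝ) + (((g ∩ S) \ f t').card : ℝ) := by
                  exact_mod_cast congrArg (Nat.cast (R := ℝ)) this.symm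
                rw [hcast]; ring
              rw [Finset.sum_congr rfl this, Finset.sum_add_distrib]
              ring
            rw [hLnew]
            have hexp : (1 + α) * (D' + (((f t' ∩ S).card : ℝ) * W (f t')
                  + ∑ g ∈ M t \ Ct, ((g ∩ S).card : ℝ) * W g))
                = (1 + α) * (D + ∑ g ∈ M t, ((g ∩ S).card : ℝ) * W g)
                  + (1 + α) * ((((f t' ∩ S).card : ℝ)) * W (f t')
                      - ∑ g ∈ Ct, ((g ∩ S ∩ f t').card : ℝ) * W g) := by
              rw [hD', hLold]; ring
            have h10 : 0 ≤ (1 + α) * ((((f t' ∩ S).card : ℝ)) * W (f t')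
                - ∑ g ∈ Ct, ((g ∩ S ∩ f t').card : ℝ) * W g) := by
              apply mul_nonneg hα1.le
              linarith
            linarith [invL]
      · -- REJECT
        have hM1 : M (t + 1) = M t := by rw [hMs, if_neg hacc]
        by_cases harr : f t' ∈ Mstar ∧ τ (f t') = t
        · -- reject with opt arrival
          obtain ⟨hfM, hft⟩ := harr
          have hrej : W (f t') < (1 + α) * ∑ g ∈ Ct, W g := not_le.mp hacc
          set v : Finset V → V := fun g =>
            if h : (g ∩ f t').Nonempty then h.choose else (hne t').choose with hv
          have hvmem : ∀ g ∈ Ct, v g ∈ g ∩ f t' := by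
            intro g hg
            have h := (Finset.mem_filter.mp hg).2
            rw [hv]
            simp only [dif_pos h]
            exact h.choose_spec
          have hvf : ∀ g ∈ Ct, v g ∈ f t' := fun g hg => (Finset.mem_inter.mp (hvmem g hg)).2
          have hvg : ∀ g ∈ Ct, v g ∈ g := fun g hg => (Finset.mem_inter.mp (hvmem g hg)).1
          have hvS : ∀ g ∈ Ct, v g ∉ S := fun g hg => hnotS (v g) (hvf g hg) hfM hft
          set S' := S ∪ Ct.image v with hS'
          refine ⟨S', D, ?_, ?_, ?_, ?_, invD0, by rw [hM1]; exact invD, ?_⟩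
          · rw [hM1]; exact inv1
          · rw [hM1]; exact inv2
          · intro x hx
            rw [hM1]
            rw [hS', Finset.mem_union] at hx
            rcases hx with hx | hx
            · exact inv3 x hx
            · obtain ⟨g, hg, rfl⟩ := Finset.mem_image.mp hx
              exact ⟨g, hCtsub hg, hvg g hg⟩
          · intro x hx
            rw [hS', Finset.mem_union] at hx
            rcases hx with hx | hx
            · obtain ⟨e, he, hxe, hlt⟩ := inv4 x hx
              exact ⟨e, he, hxe, hlt.trans (Nat.lt_succ_self t)⟩
            · obtain ⟨g, hg, rfl⟩ := Finset.mem_image.mp hx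
              exact ⟨f t', hfM, hvf g hg, by rw [hft]; exact Nat.lt_succ_self t⟩
          · rw [hfilter_eq_of_arr hfM hft]
            have hftnotf : f t' ∉ Mstar.filter (fun e => τ e < t) := by
              intro h
              rw [Finset.mem_filter, hft] at h
              exact lt_irrefl t h.2
            rw [Finset.sum_insert hftnotf, hM1]
            have hterm : ∀ g ∈ M t, ((g ∩ S').card : ℝ) * W g
                = ((g ∩ S).card : ℝ) * W g + if (g ∩ f t').Nonempty then W g else 0 := by
              intro g hg
              by_cases hgC : (g ∩ f t').Nonempty
              · have hgCt : g ∈ Ct := Finset.mem_filter.mpr ⟨hg, hgC⟩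
                have heq : g ∩ S' = insert (v g) (g ∩ S) := by
                  ext x
                  simp only [hS', Finset.mem_inter, Finset.mem_union, Finset.mem_insert,
                    Finset.mem_image]
                  constructor
                  · rintro ⟨hxg, hxS | ⟨g', hg', rfl⟩⟩
                    · exact Or.inr ⟨hxg, hxS⟩
                    · by_cases hgg' : g' = g
                      · subst hgg'; exact Or.inl rfl
                      · exact absurd hxg (Finset.disjoint_left.mp
                          (inv2 g' (hCtsub hg') g hg hgg') (hvg g' hg'))
                  · rintro (rfl | ⟨hxg, hxS⟩)
                    · exact ⟨hvg g hgCt, Or.inr ⟨g, hgCt, rfl⟩⟩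
                    · exact ⟨hxg, Or.inl hxS⟩
                have hnotmem : v g ∉ g ∩ S := fun h => hvS g hgCt (Finset.mem_inter.mp h).2
                rw [heq, Finset.card_insert_of_notMem hnotmem, if_pos hgC]
                push_cast
                ring
              · have heq : g ∩ S' = g ∩ S := by
                  ext x
                  simp only [hS', Finset.mem_inter, Finset.mem_union, Finset.mem_image]
                  constructor
                  · rintro ⟨hxg, hxS | ⟨g', hg', rfl⟩⟩
                    · exact ⟨hxg, hxS⟩
                    · have hgg' : g' ≠ g := fun h => hgC (h ▸ (Finset.mem_filter.mp hg').2)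
                      exact absurd hxg (Finset.disjoint_left.mp
                        (inv2 g' (hCtsub hg') g hg hgg') (hvg g' hg'))
                  · rintro ⟨hxg, hxS⟩; exact ⟨hxg, Or.inl hxS⟩
                rw [heq, if_neg hgC]
                ring
            have hLnew : ∑ g ∈ M t, ((g ∩ S').card : ℝ) * W g
                = ∑ g ∈ M t, ((g ∩ S).card : ℝ) * W g + ∑ g ∈ Ct, W g := by
              rw [Finset.sum_congr rfl hterm, Finset.sum_add_distrib]
              congr 1
              rw [hCt, Finset.sum_filter]
            rw [hLnew]
            have hexp : (1 + α) * (D + (∑ g ∈ M t, ((g ∩ S).card : ℝ) * W g + ∑ g ∈ Ct, W g))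
                = (1 + α) * (D + ∑ g ∈ M t, ((g ∩ S).card : ℝ) * W g)
                  + (1 + α) * ∑ g ∈ Ct, W g := by ring
            linarith [invL, hrej.le]
        · -- reject without opt arrival
          refine ⟨S, D, by rw [hM1]; exact inv1, by rw [hM1]; exact inv2,
            by rw [hM1]; exact inv3, ?_, invD0, by rw [hM1]; exact invD, ?_⟩
          · intro x hx
            obtain ⟨e, he, hxe, hlt⟩ := inv4 x hx
            exact ⟨e, he, hxe, hlt.trans (Nat.lt_succ_self t)⟩
          · rw [hfilter_eq_of_no_arr harr, hM1]
            exact invL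
  -- conclude
  obtain ⟨S, D, inv1, inv2, inv3, inv4, hD0, hDle, hL⟩ := key m le_rfl
  have hfull : Mstar.filter (fun e => τ e < m) = Mstar := by
    apply Finset.filter_true_of_mem
    intro e he
    obtain ⟨h, -⟩ := hτ e (hMstar_sub he)
    exact h
  rw [hfull] at hL
  have hWpos : ∀ g ∈ M m, 0 < W g := by
    intro g hg; obtain ⟨s, hs⟩ := inv1 g hg; exact hs ▸ hpos s
  have hL2 : ∑ g ∈ M m, ((g ∩ S).card : ℝ) * W g ≤ (d:ℝ) * ∑ g ∈ M m, W g := by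
    rw [Finset.mul_sum]
    apply Finset.sum_le_sum
    intro g hg
    refine mul_le_mul_of_nonneg_right ?_ (hWpos g hg).le
    have h1 : (g ∩ S).card ≤ g.card := Finset.card_le_card Finset.inter_subset_left
    have h2 : g.card ≤ d := by
      obtain ⟨s, hs⟩ := inv1 g hg
      rw [← hs]; exact hcard s
    exact_mod_cast h1.trans h2
  have hfin : ∑ g ∈ Mstar, W g
      ≤ (1 + α) * ((((d:ℝ) - 1) / α) * ∑ g ∈ M m, W g + (d:ℝ) * ∑ g ∈ M m, W g) := by
    calc ∑ g ∈ Mstar, W g ≤ (1 + α) * (D + ∑ g ∈ M m, ((g ∩ S).card : ℝ) * W g) := hL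
      _ ≤ (1 + α) * ((((d:ℝ) - 1) / α) * ∑ g ∈ M m, W g + (d:ℝ) * ∑ g ∈ M m, W g) := by
          apply mul_le_mul_of_nonneg_left _ hα1.le
          exact add_le_add hDle hL2
  calc ∑ g ∈ Mstar, W g
      ≤ (1 + α) * ((((d:ℝ) - 1) / α) * ∑ g ∈ M m, W g + (d:ℝ) * ∑ g ∈ M m, W g) := hfin
    _ = (1 + α) * (((d : ℝ) - 1) / α + d) * ∑ g ∈ M m, W g := by ring
end

section
/- Optimality of the SwapSet parameter, lower bound: For all real numbers d and α with 1 ≤ d and 0 < α, (2·d − 1) + 2·Real.sqrt (d·(d−1)) ≤ (1+α) · ((d−1)/α + d). -/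
/-- Optimality of the SwapSet parameter, lower bound: for all reals `d ≥ 1`
and `α > 0`, `(2d - 1) + 2√(d(d-1)) ≤ (1+α) * ((d-1)/α + d)`. -/
theorem swapset_parameter_lower_bound
    (d α : ℝ) (hd : 1 ≤ d) (hα : 0 < α) :
    (2 * d - 1) + 2 * Real.sqrt (d * (d - 1)) ≤ (1 + α) * ((d - 1) / α + d) := by
  have h1 : (0:ℝ) ≤ d - 1 := by linarith
  have ha : (0:ℝ) ≤ (d-1)/α := div_nonneg h1 hα.le
  have hb : (0:ℝ) ≤ α * d := by positivity
  have key : 2 * Real.sqrt (d * (d - 1)) ≤ (d-1)/α + α * d := by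
    have h2 : Real.sqrt (d * (d-1)) ≤ ((d-1)/α + α * d) / 2 := by
      rw [show d * (d-1) = ((d-1)/α) * (α * d) by field_simp]
      have := Real.sqrt_le_sqrt (show ((d-1)/α) * (α*d) ≤ (((d-1)/α + α*d)/2)^2 by nlinarith [sq_nonneg ((d-1)/α - α*d)])
      calc Real.sqrt ((d-1)/α * (α*d)) ≤ Real.sqrt ((((d-1)/α + α*d)/2)^2) := this
        _ = ((d-1)/α + α*d)/2 := Real.sqrt_sq (by linarith)
    linarith
  have : (1 + α) * ((d - 1) / α + d) = (2*d - 1) + ((d-1)/α + α * d) := by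
    field_simp; ring
  linarith
end
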